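/- arXiv:1711.07299 — 6 statements merged into one kernel-verified Lean document; each statement's English description precedes it below -/
import Mathlib

section
/- Let {B_t}_{t∈ℝ} be a weakly differentiable family of bounded operators on a complex Hilbert space H, with weak derivative family {(∂B)_t}. Then for any continuously differentiable functions ξ, ψ : ℝ → H, the function t ↦ ⟨ξ(t), B_t ψ(t)⟩ is continuously differentiable, with derivative ⟨ξ'(t), B_t ψ(t)⟩ + ⟨ξ(t), B_t ψ'(t)⟩ + ⟨ξ(t), (∂B)_t ψ(t)⟩. -/
open scoped InnerProductSpace Topology
open Filter

/-!
A weakly continuous family of operators is locally bounded in norm: on a compact neighbourhood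
the matrix coefficients `⟪x, A t y⟫` are bounded, and the uniform boundedness principle, applied
once to the vectors `A t y` and once to the operators `A t`, bounds `‖A t‖`. For a norm-bounded
family, weak convergence `A s → A₀` together with norm convergence `ξ s → ξ₀`, `ψ s → ψ₀` gives
`⟪ξ s, A s (ψ s)⟫ → ⟪ξ₀, A₀ ψ₀⟫`. Applied to the three terms of the product-rule splitting of the
difference quotient this yields the derivative, and applied to the three terms of the derivative
it yields its continuity.
-/

section

variable {𝕜 E F : Type*} [RCLike 𝕜]
  [NormedAddCommGroup E] [InnerProductSpace 𝕜 E] [NormedAddCommGroup F] [InnerProductSpace 𝕜 F]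

theorem exists_norm_le_of_forall_norm_inner_le [CompleteSpace E] [CompleteSpace F] {ι : Type*}
    {A : ι → E →L[𝕜] F} (hA : ∀ x y, ∃ C, ∀ i, ‖⟪x, A i y⟫_𝕜‖ ≤ C) :
    ∃ C, ∀ i, ‖A i‖ ≤ C := by
  have hpointwise : ∀ y, ∃ C, ∀ i, ‖A i y‖ ≤ C := by
    intro y
    obtain ⟨C, hC⟩ := banach_steinhaus (g := fun i => innerSL 𝕜 (A i y)) fun x => by
      obtain ⟨C, hC⟩ := hA x y
      exact ⟨C, fun i => by simpa only [innerSL_apply_apply, norm_inner_symm] using hC i⟩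
    exact ⟨C, fun i => by simpa only [innerSL_apply_norm] using hC i⟩
  exact banach_steinhaus hpointwise

theorem isBoundedUnder_norm_nhds_of_continuous_inner [CompleteSpace E] [CompleteSpace F]
    {X : Type*} [TopologicalSpace X] [WeaklyLocallyCompactSpace X] {A : X → E →L[𝕜] F}
    (hA : ∀ x y, Continuous fun t => ⟪x, A t y⟫_𝕜) (t : X) :
    IsBoundedUnder (· ≤ ·) (𝓝 t) (norm ∘ A) := by
  obtain ⟨K, hK, hKt⟩ := exists_compact_mem_nhds t
  obtain ⟨C, hC⟩ := exists_norm_le_of_forall_norm_inner_le (A := fun s : K => A s) fun x y =>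
    let ⟨C, hC⟩ := hK.exists_bound_of_continuousOn (hA x y).continuousOn
    ⟨C, fun s => hC s s.2⟩
  exact isBoundedUnder_of_eventually_le (a := C) <| mem_of_superset hKt fun s hs => hC ⟨s, hs⟩

theorem tendsto_inner_apply {ι : Type*} {l : Filter ι} {A : ι → E →L[𝕜] F} {A₀ : E →L[𝕜] F}
    {ξ : ι → F} {ψ : ι → E} {ξ₀ : F} {ψ₀ : E}
    (hA : Tendsto (fun s => ⟪ξ₀, A s ψ₀⟫_𝕜) l (𝓝 ⟪ξ₀, A₀ ψ₀⟫_𝕜))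
    (hbd : IsBoundedUnder (· ≤ ·) l (norm ∘ A)) (hξ : Tendsto ξ l (𝓝 ξ₀))
    (hψ : Tendsto ψ l (𝓝 ψ₀)) :
    Tendsto (fun s => ⟪ξ s, A s (ψ s)⟫_𝕜) l (𝓝 ⟪ξ₀, A₀ ψ₀⟫_𝕜) := by
  have hA_sub : Tendsto (fun s => A s (ψ s - ψ₀)) l (𝓝 0) := by
    refine (tendsto_sub_nhds_zero_iff.2 hψ).op_zero_isBoundedUnder_le hbd (fun v T => T v)
      fun v T => ?_
    rw [mul_comm]
    exact T.le_opNorm v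
  have hξ_sub : Tendsto (fun s => ⟪ξ s - ξ₀, A s ψ₀⟫_𝕜) l (𝓝 0) := by
    refine (tendsto_sub_nhds_zero_iff.2 hξ).op_zero_isBoundedUnder_le' hbd
      (fun x T => ⟪x, T ψ₀⟫_𝕜) ⟨‖ψ₀‖, fun x T => ?_⟩
    calc ‖⟪x, T ψ₀⟫_𝕜‖ ≤ ‖x‖ * (‖T‖ * ‖ψ₀‖) :=
          (norm_inner_le_norm _ _).trans (by gcongr; exact T.le_opNorm ψ₀)
      _ = ‖ψ₀‖ * ‖x‖ * ‖T‖ := by ring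
  have hsplit : ∀ s, ⟪ξ s, A s (ψ s)⟫_𝕜 =
      ⟪ξ s, A s (ψ s - ψ₀)⟫_𝕜 + ⟪ξ s - ξ₀, A s ψ₀⟫_𝕜 + ⟪ξ₀, A s ψ₀⟫_𝕜 := fun s => by
    rw [map_sub, inner_sub_right, inner_sub_left]
    ring
  simpa only [← hsplit, inner_zero_right, zero_add] using ((hξ.inner hA_sub).add hξ_sub).add hA

theorem continuous_inner_apply {X : Type*} [TopologicalSpace X] [WeaklyLocallyCompactSpace X]
    [CompleteSpace E] [CompleteSpace F] {A : X → E →L[𝕜] F}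
    (hA : ∀ x y, Continuous fun t => ⟪x, A t y⟫_𝕜) {ξ : X → F} {ψ : X → E}
    (hξ : Continuous ξ) (hψ : Continuous ψ) : Continuous fun t => ⟪ξ t, A t (ψ t)⟫_𝕜 :=
  continuous_iff_continuousAt.2 fun t =>
    tendsto_inner_apply ((hA _ _).tendsto t) (isBoundedUnder_norm_nhds_of_continuous_inner hA t)
      (hξ.tendsto t) (hψ.tendsto t)

variable [NormedSpace ℝ E] [IsScalarTower ℝ 𝕜 E] [NormedSpace ℝ F] [IsScalarTower ℝ 𝕜 F]

theorem slope_inner_apply (A : ℝ → E →L[𝕜] F) (ξ : ℝ → F) (ψ : ℝ → E) (t s : ℝ) :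
    slope (fun u => ⟪ξ u, A u (ψ u)⟫_𝕜) t s =
      ⟪slope ξ t s, A s (ψ s)⟫_𝕜 + ⟪ξ t, A s (slope ψ t s)⟫_𝕜 +
        slope (fun u => ⟪ξ t, A u (ψ t)⟫_𝕜) t s := by
  simp only [slope_def_module, ← algebraMap_smul 𝕜 (s - t)⁻¹, inner_smul_left, inner_smul_right,
    map_smul, smul_eq_mul, RCLike.algebraMap_eq_ofReal, RCLike.conj_ofReal, inner_sub_left,
    inner_sub_right, map_sub]
  ring

theorem hasDerivAt_inner_apply {A : ℝ → E →L[𝕜] F} {A' : E →L[𝕜] F} {ξ : ℝ → F} {ψ : ℝ → E}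
    {ξ' : F} {ψ' : E} {t : ℝ} (hA : ∀ x y, HasDerivAt (fun s => ⟪x, A s y⟫_𝕜) ⟪x, A' y⟫_𝕜 t)
    (hbd : IsBoundedUnder (· ≤ ·) (𝓝 t) (norm ∘ A)) (hξ : HasDerivAt ξ ξ' t)
    (hψ : HasDerivAt ψ ψ' t) :
    HasDerivAt (fun s => ⟪ξ s, A s (ψ s)⟫_𝕜)
      (⟪ξ', A t (ψ t)⟫_𝕜 + ⟪ξ t, A t ψ'⟫_𝕜 + ⟪ξ t, A' (ψ t)⟫_𝕜) t := by
  rw [hasDerivAt_iff_tendsto_slope]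
  have hbd' := hbd.mono (nhdsWithin_le_nhds (s := {t}ᶜ))
  have hAt : ∀ x y, Tendsto (fun s => ⟪x, A s y⟫_𝕜) (𝓝[≠] t) (𝓝 ⟪x, A t y⟫_𝕜) := fun x y =>
    (hA x y).continuousAt.tendsto.mono_left nhdsWithin_le_nhds
  have hslope_ξ := tendsto_inner_apply (hAt ξ' (ψ t)) hbd' (hasDerivAt_iff_tendsto_slope.1 hξ)
    (hψ.continuousAt.tendsto.mono_left nhdsWithin_le_nhds)
  have hslope_ψ := tendsto_inner_apply (hAt (ξ t) ψ') hbd' tendsto_const_nhds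
    (hasDerivAt_iff_tendsto_slope.1 hψ)
  have hslope_A := hasDerivAt_iff_tendsto_slope.1 (hA (ξ t) (ψ t))
  exact ((hslope_ξ.add hslope_ψ).add hslope_A).congr fun s => (slope_inner_apply A ξ ψ t s).symm

end

/-- Let `{B t}` be a weakly differentiable family of bounded operators on a
complex Hilbert space `H`, with weak derivative family `B'`. Then for any continuously
differentiable `ξ ψ : ℝ → H`, the function `t ↦ ⟪ξ t, B t (ψ t)⟫` is continuously
differentiable with derivative `⟪ξ' t, B t (ψ t)⟫ + ⟪ξ t, B t (ψ' t)⟫ + ⟪ξ t, B' t (ψ t)⟫`. -/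
theorem weakly_differentiable_family_inner_C1
    {H : Type*} [NormedAddCommGroup H] [InnerProductSpace ℂ H] [CompleteSpace H]
    (B B' : ℝ → H →L[ℂ] H)
    (hweakcont : ∀ ξ ψ : H, Continuous fun t : ℝ => ⟪ξ, B' t ψ⟫_ℂ)
    (hderiv : ∀ (ξ ψ : H) (t : ℝ),
      HasDerivAt (fun s : ℝ => ⟪ξ, B s ψ⟫_ℂ) ⟪ξ, B' t ψ⟫_ℂ t)
    (ξ ψ ξ' ψ' : ℝ → H)
    (hξ : ∀ t : ℝ, HasDerivAt ξ (ξ' t) t) (hξ' : Continuous ξ')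
    (hψ : ∀ t : ℝ, HasDerivAt ψ (ψ' t) t) (hψ' : Continuous ψ') :
    (∀ t : ℝ, HasDerivAt (fun s : ℝ => ⟪ξ s, B s (ψ s)⟫_ℂ)
        (⟪ξ' t, B t (ψ t)⟫_ℂ + ⟪ξ t, B t (ψ' t)⟫_ℂ + ⟪ξ t, B' t (ψ t)⟫_ℂ) t) ∧
      Continuous (fun t : ℝ =>
        ⟪ξ' t, B t (ψ t)⟫_ℂ + ⟪ξ t, B t (ψ' t)⟫_ℂ + ⟪ξ t, B' t (ψ t)⟫_ℂ) := by
  have hξc : Continuous ξ := continuous_iff_continuousAt.2 fun t => (hξ t).continuousAt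
  have hψc : Continuous ψ := continuous_iff_continuousAt.2 fun t => (hψ t).continuousAt
  have hBweak : ∀ x y : H, Continuous fun t => ⟪x, B t y⟫_ℂ := fun x y =>
    continuous_iff_continuousAt.2 fun t => (hderiv x y t).continuousAt
  refine ⟨fun t => hasDerivAt_inner_apply (hderiv · · t)
    (isBoundedUnder_norm_nhds_of_continuous_inner hBweak t) (hξ t) (hψ t), ?_⟩
  exact ((continuous_inner_apply hBweak hξ' hψc).add (continuous_inner_apply hBweak hξc hψ')).add
    (continuous_inner_apply hweakcont hξc hψc)
end

section
/- Let {B_t}_{t∈ℝ} be a strongly differentiable family of bounded operators on a complex Hilbert space H, with strong derivative family {(∂B)_t}. In the Banach space C₀(ℝ,H) of continuous H-valued functions vanishing at infinity (with the supremum norm), consider the densely defined operator T₁ : ψ ↦ (t ↦ (∂B)_t ψ(t)) with domain the compactly supported continuous H-valued functions C_c(ℝ,H), and the densely defined operator T₂ : ψ ↦ (d/dt)(B_• ψ) − B_•(dψ/dt) (where (B_•ψ)(t) = B_t ψ(t)) with domain the compactly supported continuously differentiable H-valued functions C_c¹(ℝ,H). Then T₁ and T₂ are closable and their closures coincide. 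-/
/-!
On `C_c¹` the two operators agree: by the product rule for a strongly differentiable family,
`(d/dt)(B_t ψ(t)) = (∂B)_t ψ(t) + B_t ψ'(t)`, so the graph of `T₂` lies in that of `T₁`.
Conversely, a compactly supported continuous `ψ` is a uniform limit of smooth functions
supported in one fixed compact set `K`; by Banach–Steinhaus `‖(∂B)_t‖` is bounded on `K`, so
`T₁` of the approximants converges uniformly to `T₁ ψ`, and the graph of `T₁` lies in the
closure of that of `T₂`. Finally, the graph of `T₁` lies in the graph of the everywhere defined
multiplication operator `ψ ↦ (t ↦ (∂B)_t ψ(t))`, which is closed because evaluations at points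
are continuous on `C₀(ℝ, H)`; hence the common closure is single-valued.
-/

open scoped ZeroAtInfty ContDiff Topology
open Filter Metric Function Asymptotics

/-- The graph of the operator `T₁ : ψ ↦ (t ↦ B' t (ψ t))` on the Banach space `C₀(ℝ, H)`,
with domain the compactly supported continuous `H`-valued functions. -/
def graphDerivFamily {H : Type*} [NormedAddCommGroup H] [NormedSpace ℂ H]
    (B' : ℝ → H →L[ℂ] H) : Set (C₀(ℝ, H) × C₀(ℝ, H)) :=
  {p | HasCompactSupport ⇑p.1 ∧ ∀ t : ℝ, p.2 t = B' t (p.1 t)}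

/-- The graph of the operator `T₂ : ψ ↦ (d/dt)(B_• ψ) − B_• (dψ/dt)` on the Banach space
`C₀(ℝ, H)`, with domain the compactly supported continuously differentiable `H`-valued
functions (here `(B_• ψ)(t) = B t (ψ t)`). -/
def graphCommutator {H : Type*} [NormedAddCommGroup H] [NormedSpace ℂ H]
    (B : ℝ → H →L[ℂ] H) : Set (C₀(ℝ, H) × C₀(ℝ, H)) :=
  {p | HasCompactSupport ⇑p.1 ∧
    ∃ ψ' : C₀(ℝ, H), (∀ t : ℝ, HasDerivAt (⇑p.1) (ψ' t) t) ∧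
      ∃ g : ℝ → H, (∀ t : ℝ, HasDerivAt (fun s : ℝ => B s (p.1 s)) (g t) t) ∧
        ∀ t : ℝ, p.2 t = g t - B t (ψ' t)}

section StronglyContinuous

variable {𝕜 X E F : Type*} [NontriviallyNormedField 𝕜] [TopologicalSpace X]
  [NormedAddCommGroup E] [NormedSpace 𝕜 E] [CompleteSpace E]
  [NormedAddCommGroup F] [NormedSpace 𝕜 F] {C : X → E →L[𝕜] F}

theorem IsCompact.exists_bound_opNorm_of_continuous_apply
    (hC : ∀ x, Continuous fun t => C t x) {K : Set X} (hK : IsCompact K) :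
    ∃ M, 0 < M ∧ ∀ t ∈ K, ‖C t‖ ≤ M := by
  obtain ⟨M, hM⟩ := banach_steinhaus (g := fun t : K => C t) fun x => by
    obtain ⟨M, hM⟩ := hK.exists_bound_of_continuousOn (hC x).continuousOn
    exact ⟨M, fun t => hM t t.2⟩
  exact ⟨max M 1, by positivity, fun t ht => (hM ⟨t, ht⟩).trans (le_max_left _ _)⟩

theorem Continuous.clm_apply_of_continuous_apply [WeaklyLocallyCompactSpace X]
    (hC : ∀ x, Continuous fun t => C t x) {ψ : X → E} (hψ : Continuous ψ) :
    Continuous fun t => C t (ψ t) := by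
  refine continuous_iff_continuousAt.2 fun t₀ => ?_
  obtain ⟨K, hK, hK_nhds⟩ := exists_compact_mem_nhds t₀
  obtain ⟨M, -, hM⟩ := hK.exists_bound_opNorm_of_continuous_apply hC
  rw [ContinuousAt, tendsto_iff_norm_sub_tendsto_zero]
  have hlim : Tendsto (fun s => M * ‖ψ s - ψ t₀‖ + ‖C s (ψ t₀) - C t₀ (ψ t₀)‖)
      (𝓝 t₀) (𝓝 0) := by
    simpa using ((tendsto_iff_norm_sub_tendsto_zero.1 (hψ.tendsto t₀)).const_mul M).add
      (tendsto_iff_norm_sub_tendsto_zero.1 ((hC (ψ t₀)).tendsto t₀))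
  refine squeeze_zero' (Eventually.of_forall fun _ => norm_nonneg _) ?_ hlim
  filter_upwards [hK_nhds] with s hs
  calc ‖C s (ψ s) - C t₀ (ψ t₀)‖ = ‖C s (ψ s - ψ t₀) + (C s (ψ t₀) - C t₀ (ψ t₀))‖ := by
        rw [map_sub, sub_add_sub_cancel]
    _ ≤ ‖C s (ψ s - ψ t₀)‖ + ‖C s (ψ t₀) - C t₀ (ψ t₀)‖ := norm_add_le _ _
    _ ≤ M * ‖ψ s - ψ t₀‖ + ‖C s (ψ t₀) - C t₀ (ψ t₀)‖ := by
        gcongr; exact (C s).le_of_opNorm_le (hM s hs) _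

end StronglyContinuous

theorem norm_apply_sub_apply_le_of_support_subset {𝕜 X E F : Type*} [NontriviallyNormedField 𝕜]
    [NormedAddCommGroup E] [NormedSpace 𝕜 E] [NormedAddCommGroup F] [NormedSpace 𝕜 F]
    {C : X → E →L[𝕜] F} {K : Set X} {M : ℝ}
    (hM : ∀ t ∈ K, ‖C t‖ ≤ M) {f g : X → E} (hf : support f ⊆ K) (hg : support g ⊆ K)
    (t : X) : ‖C t (f t) - C t (g t)‖ ≤ M * ‖f t - g t‖ := by
  by_cases ht : t ∈ K
  · rw [← map_sub]
    exact (C t).le_of_opNorm_le (hM t ht) _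
  · simp [notMem_support.1 fun h => ht (hf h), notMem_support.1 fun h => ht (hg h)]

section StrongDerivative

variable {𝕜 E F : Type*} [NontriviallyNormedField 𝕜] [NormedAlgebra ℝ 𝕜]
  [NormedAddCommGroup E] [NormedSpace 𝕜 E] [NormedSpace ℝ E] [IsScalarTower ℝ 𝕜 E]
  [CompleteSpace E] [NormedAddCommGroup F] [NormedSpace 𝕜 F] [NormedSpace ℝ F]
  [IsScalarTower ℝ 𝕜 F] {C : ℝ → E →L[𝕜] F} {ψ : ℝ → E} {v : E} {t₀ : ℝ}

/-- Write `ψ s - ψ t₀ = (s - t₀) • v + o(s - t₀)`: strong continuity of `C` handles the first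
term, local boundedness of `‖C s‖` the second. -/
theorem isLittleO_sub_apply_sub (hC : ∀ x, Continuous fun t => C t x)
    (hψ : HasDerivAt ψ v t₀) :
    (fun s => (C s - C t₀) (ψ s - ψ t₀)) =o[𝓝 t₀] fun s => s - t₀ := by
  obtain ⟨M, -, hM⟩ :=
    (isCompact_closedBall t₀ 1).exists_bound_opNorm_of_continuous_apply hC
  have hremainder : (fun s => (C s - C t₀) (ψ s - ψ t₀ - (s - t₀) • v)) =o[𝓝 t₀]
      fun s => s - t₀ := by
    refine (IsBigO.of_bound (M + M) ?_).trans_isLittleO (hasDerivAt_iff_isLittleO.1 hψ)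
    filter_upwards [closedBall_mem_nhds t₀ one_pos] with s hs
    refine (C s - C t₀).le_of_opNorm_le ((norm_sub_le _ _).trans ?_) _
    exact add_le_add (hM s hs) (hM t₀ (mem_closedBall_self zero_le_one))
  have hlinear : (fun s => (s - t₀) • (C s - C t₀) v) =o[𝓝 t₀] fun s => s - t₀ := by
    refine (isBigO_refl _ _).smul_isLittleO (isLittleO_one_iff ℝ |>.2 ?_) |>.congr_right
      (by simp)
    simpa using ((hC v).tendsto t₀).sub_const (C t₀ v)
  refine (hremainder.add hlinear).congr_left fun s => ?_
  rw [map_sub (C s - C t₀), ContinuousLinearMap.map_smul_of_tower, sub_add_cancel]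

theorem HasDerivAt.clm_apply_of_hasDerivAt_apply {C' : ℝ → E →L[𝕜] F}
    (hC : ∀ x t, HasDerivAt (fun s => C s x) (C' t x) t) (hψ : HasDerivAt ψ v t₀) :
    HasDerivAt (fun s => C s (ψ s)) (C' t₀ (ψ t₀) + C t₀ v) t₀ := by
  have hC_cont : ∀ x, Continuous fun t => C t x :=
    fun x => continuous_iff_continuousAt.2 fun t => (hC x t).continuousAt
  have hcross : HasDerivAt (fun s => (C s - C t₀) (ψ s - ψ t₀)) 0 t₀ := by
    simpa [hasDerivAt_iff_isLittleO] using isLittleO_sub_apply_sub hC_cont hψ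
  have hsum := (((hC (ψ t₀) t₀).add
    (((C t₀).restrictScalars ℝ).hasFDerivAt.comp_hasDerivAt t₀ hψ)).sub_const
    (C t₀ (ψ t₀))).add hcross
  rw [add_zero] at hsum
  refine hsum.congr_of_eventuallyEq (Eventually.of_forall fun s => ?_)
  simp only [Pi.add_apply, comp_apply, sub_apply, map_sub,
    ContinuousLinearMap.coe_restrictScalars']
  abel

end StrongDerivative

/-- A global smooth approximant, multiplied by a bump equal to `1` on `closedBall c r`: off
that ball `f` vanishes and the bump is at most `1`, so the error does not grow. -/
theorem UniformContinuous.exists_contDiff_support_subset_dist_lt {E F : Type*}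
    [NormedAddCommGroup E] [NormedSpace ℝ E] [FiniteDimensional ℝ E]
    [NormedAddCommGroup F] [NormedSpace ℝ F] [CompleteSpace F] {f : E → F}
    (hf : UniformContinuous f) {c : E} {r R ε : ℝ} (hr : 0 < r) (hrR : r < R)
    (hfr : support f ⊆ closedBall c r) (hε : 0 < ε) :
    ∃ g : E → F, ContDiff ℝ ∞ g ∧ support g ⊆ ball c R ∧ ∀ x, dist (g x) (f x) < ε := by
  obtain ⟨g, hg, hgf⟩ := hf.exists_contDiff_dist_le hε
  let φ : ContDiffBump c := ⟨r, R, hr, hrR⟩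
  refine ⟨fun x => φ x • g x, φ.contDiff.smul hg,
    (support_smul_subset_left _ _).trans φ.support_eq.subset, fun x => ?_⟩
  by_cases hx : x ∈ closedBall c r
  · simpa [φ.one_of_mem_closedBall hx] using hgf x
  · have hfx : f x = 0 := notMem_support.1 fun h => hx (hfr h)
    calc dist (φ x • g x) (f x) = φ x * ‖g x‖ := by
          rw [hfx, dist_zero_right, norm_smul, Real.norm_of_nonneg φ.nonneg]
      _ ≤ ‖g x‖ := mul_le_of_le_one_left (norm_nonneg _) φ.le_one
      _ < ε := by simpa [hfx] using hgf x

namespace ZeroAtInftyContinuousMap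

variable {X E : Type*} [TopologicalSpace X] [NormedAddCommGroup E]

instance : ContinuousEvalConst C₀(X, E) X E where
  continuous_eval_const x :=
    (ContinuousEvalConst.continuous_eval_const (F := BoundedContinuousFunction X E) x).comp
      isometry_toBCF.continuous

theorem dist_le_of_forall_dist_le {f g : C₀(X, E)} {C : ℝ} (hC : 0 ≤ C)
    (h : ∀ x, dist (f x) (g x) ≤ C) : dist f g ≤ C :=
  (BoundedContinuousFunction.dist_le hC).2 h

def ofHasCompactSupport (f : X → E) (hc : Continuous f) (hs : HasCompactSupport f) :
    C₀(X, E) :=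
  ⟨⟨f, hc⟩, hs.is_zero_at_infty⟩

end ZeroAtInftyContinuousMap

section Graphs

open ZeroAtInftyContinuousMap

variable {H : Type*} [NormedAddCommGroup H] [NormedSpace ℂ H]

theorem isClosed_setOf_forall_apply_eq (C : ℝ → H →L[ℂ] H) :
    IsClosed {p : C₀(ℝ, H) × C₀(ℝ, H) | ∀ t, p.2 t = C t (p.1 t)} := by
  simp only [Set.ofPred_forall]
  exact isClosed_iInter fun t => isClosed_eq (by fun_prop) (by fun_prop)

variable [CompleteSpace H] {B B' : ℝ → H →L[ℂ] H}

theorem graphCommutator_subset_graphDerivFamily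
    (hB : ∀ ψ t, HasDerivAt (fun s => B s ψ) (B' t ψ) t) :
    graphCommutator B ⊆ graphDerivFamily B' := by
  rintro ⟨ψ, φ⟩ ⟨hψ_supp, ψ', hψ', g, hg, hφ⟩
  refine ⟨hψ_supp, fun t => ?_⟩
  rw [hφ t, (hg t).unique (HasDerivAt.clm_apply_of_hasDerivAt_apply hB (hψ' t)),
    add_sub_cancel_right]

theorem exists_mem_graphCommutator_of_contDiff
    (hB : ∀ ψ t, HasDerivAt (fun s => B s ψ) (B' t ψ) t)
    (hB' : ∀ ψ, Continuous fun t => B' t ψ) {χ : ℝ → H} (hχ : ContDiff ℝ 1 χ)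
    (hχ_supp : HasCompactSupport χ) :
    ∃ p ∈ graphCommutator B, ⇑p.1 = χ ∧ ∀ t, p.2 t = B' t (χ t) := by
  have hχ' : ∀ t, HasDerivAt χ (deriv χ t) t :=
    fun t => (hχ.differentiable one_ne_zero t).hasDerivAt
  have hBχ_supp : HasCompactSupport fun t => B' t (χ t) :=
    hχ_supp.mono fun t ht hχt => ht (by simp [hχt])
  refine ⟨(ofHasCompactSupport χ hχ.continuous hχ_supp,
      ofHasCompactSupport _ (hχ.continuous.clm_apply_of_continuous_apply hB') hBχ_supp),
    ⟨hχ_supp, ofHasCompactSupport _ (hχ.continuous_deriv le_rfl) hχ_supp.deriv, hχ', _,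
      fun t => HasDerivAt.clm_apply_of_hasDerivAt_apply hB (hχ' t),
      fun t => (add_sub_cancel_right _ _).symm⟩,
    rfl, fun t => rfl⟩

theorem graphDerivFamily_subset_closure_graphCommutator
    (hB : ∀ ψ t, HasDerivAt (fun s => B s ψ) (B' t ψ) t)
    (hB' : ∀ ψ, Continuous fun t => B' t ψ) :
    graphDerivFamily B' ⊆ closure (graphCommutator B) := by
  rintro ⟨ψ, φ⟩ ⟨hψ_supp, hφ⟩
  obtain ⟨r, hr, hψr⟩ := hψ_supp.isCompact.isBounded.subset_closedBall_lt 0 (0 : ℝ)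
  replace hψr := (subset_tsupport ψ).trans hψr
  set K := closedBall (0 : ℝ) (r + 1)
  obtain ⟨M, hM_pos, hM⟩ := (isCompact_closedBall _ _).exists_bound_opNorm_of_continuous_apply
    (K := K) hB'
  refine Metric.mem_closure_iff.2 fun ε hε => ?_
  set δ := ε / (M + 1)
  have hδ : 0 < δ := by positivity
  have hδε : δ < ε := div_lt_self hε (by linarith)
  have hMδε : M * δ < ε := by
    rw [← mul_div_assoc, div_lt_iff₀ (by linarith)]
    linarith
  obtain ⟨χ, hχ, hχ_supp, hχψ⟩ := (uniformContinuous ψ).exists_contDiff_support_subset_dist_lt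
    hr (lt_add_one r) hψr hδ
  have hχK : support χ ⊆ K := hχ_supp.trans ball_subset_closedBall
  have hψK : support ⇑ψ ⊆ K := hψr.trans (closedBall_subset_closedBall (by linarith))
  obtain ⟨q, hq, hq₁, hq₂⟩ := exists_mem_graphCommutator_of_contDiff hB hB'
    (contDiff_infty.1 hχ 1) (.of_support_subset_isCompact (isCompact_closedBall _ _) hχK)
  refine ⟨q, hq, max_lt ((dist_le_of_forall_dist_le hδ.le fun t => ?_).trans_lt hδε)
    ((dist_le_of_forall_dist_le (by positivity) fun t => ?_).trans_lt hMδε)⟩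
  · rw [hq₁, dist_comm]
    exact (hχψ t).le
  · rw [hφ t, hq₂ t, dist_eq_norm, norm_sub_rev]
    refine (norm_apply_sub_apply_le_of_support_subset hM hχK hψK t).trans ?_
    rw [← dist_eq_norm]
    gcongr
    exact (hχψ t).le

end Graphs

/-- For a strongly differentiable family `{B t}` of bounded operators on a
complex Hilbert space `H` with strong derivative family `B'`, the operators `T₁` and `T₂` on
`C₀(ℝ, H)` are closable and have the same closure: the closures of their graphs coincide and
are single-valued (i.e. are themselves graphs of operators). -/
theorem closure_graphDerivFamily_eq_closure_graphCommutator
    {H : Type*} [NormedAddCommGroup H] [InnerProductSpace ℂ H] [CompleteSpace H]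
    (B B' : ℝ → H →L[ℂ] H)
    (hB : ∀ (ψ : H) (t : ℝ), HasDerivAt (fun s : ℝ => B s ψ) (B' t ψ) t)
    (hB' : ∀ ψ : H, Continuous fun t : ℝ => B' t ψ) :
    closure (graphDerivFamily B') = closure (graphCommutator B) ∧
      ∀ y : C₀(ℝ, H), ((0 : C₀(ℝ, H)), y) ∈ closure (graphDerivFamily B') → y = 0 := by
  refine ⟨(closure_minimal (graphDerivFamily_subset_closure_graphCommutator hB hB')
    isClosed_closure).antisymm (closure_mono (graphCommutator_subset_graphDerivFamily hB)),
    fun y hy => ?_⟩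
  have hy_graph := closure_minimal (fun p hp => hp.2) (isClosed_setOf_forall_apply_eq B') hy
  ext t
  simpa using hy_graph t
end

section
/- Under the stated hypotheses, the maximal domain of the operator DT satisfies {ψ ∈ H : Tψ ∈ Dom D} = Dom D, and consequently the operator ψ ↦ D(Tψ) with domain Dom D is a closed operator on H. -/
/-!
The heart of the matter is that `T⁻¹` maps `Dom D` into itself, i.e. `Dom D ⊆ T (Dom D)`.
Put `S = T²`: it is coercive, `re ⟪S x, x⟫ = ‖T x‖² ≥ ε ‖x‖²`, and `[D, S]` is bounded.
In the Hilbert space `H ⊕ H` the graph `Γ` of the closed operator `D` contains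
`V = {(S x, D S x) : x ∈ Dom D}`, which is closed because `(x, D x) ↦ (S x, D S x)` is bounded
below. If `(χ, D χ) ∈ Γ` is orthogonal to `V`, pairing it with `(S χ, D S χ)` gives
`re ⟪S χ, χ⟫ + re ⟪D S χ, D χ⟫ = 0`, whereas coercivity and `‖[D, S]‖ ≤ C` bound the left side
below by `(ε - C / 2) (‖χ‖² + ‖D χ‖²)`. After rescaling `D` to make `C < 2 ε` this forces `χ = 0`,
so `V = Γ` and `Dom D = S (Dom D)`. The graph of `ψ ↦ D (T ψ)` is then the preimage of `Γ`
under `(ψ, φ) ↦ (T ψ, φ)`.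
-/

open scoped InnerProductSpace
open RCLike

theorem cauchySeq_of_dist_le_mul {α β : Type*} [PseudoMetricSpace α] [PseudoMetricSpace β]
    {u : ℕ → α} {v : ℕ → β} {K : ℝ} (h : ∀ m n, dist (u m) (u n) ≤ K * dist (v m) (v n))
    (hv : CauchySeq v) : CauchySeq u := by
  rw [cauchySeq_iff_tendsto_dist_atTop_0] at hv ⊢
  exact squeeze_zero (fun _ => dist_nonneg) (fun p : ℕ × ℕ => h p.1 p.2)
    (by simpa using hv.const_mul K)

namespace ContinuousLinearMap

variable {𝕜 H : Type*} [RCLike 𝕜] [NormedAddCommGroup H] [InnerProductSpace 𝕜 H]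

theorem mul_norm_le_norm_apply {S : H →L[𝕜] H} {ε : ℝ}
    (hS : ∀ x, ε * ‖x‖ ^ 2 ≤ re ⟪S x, x⟫_𝕜) (x : H) : ε * ‖x‖ ≤ ‖S x‖ := by
  rcases (norm_nonneg x).eq_or_lt with hx | hx
  · rw [← hx, mul_zero]
    exact norm_nonneg _
  · refine le_of_mul_le_mul_right ?_ hx
    calc ε * ‖x‖ * ‖x‖ = ε * ‖x‖ ^ 2 := by ring
      _ ≤ re ⟪S x, x⟫_𝕜 := hS x
      _ ≤ ‖S x‖ * ‖x‖ := (re_le_norm _).trans (norm_inner_le_norm _ _)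

theorem inv_sq_mul_norm_sq_le_re_inner_comp_self [CompleteSpace H] {T : H →L[𝕜] H}
    (hT : IsSelfAdjoint T) {K : ℝ} (hK : 0 < K) (hTK : ∀ x, ‖x‖ ≤ K * ‖T x‖) (x : H) :
    K⁻¹ ^ 2 * ‖x‖ ^ 2 ≤ re ⟪(T ∘L T) x, x⟫_𝕜 := by
  have hnorm := T.apply_norm_sq_eq_inner_adjoint_left (𝕜 := 𝕜) x
  rw [hT.adjoint_eq] at hnorm
  rw [← hnorm, ← mul_pow]
  exact pow_le_pow_left₀ (by positivity) ((inv_mul_le_iff₀ hK).mpr (hTK x)) 2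

end ContinuousLinearMap

namespace LinearPMap

variable {𝕜 H : Type*} [RCLike 𝕜] [NormedAddCommGroup H] [InnerProductSpace 𝕜 H]

theorem IsClosed.smul {D : H →ₗ.[𝕜] H} (hD : D.IsClosed) {c : 𝕜} (hc : c ≠ 0) :
    (c • D).IsClosed := by
  have hgraph : ((c • D).graph : Set (H × H)) =
      (fun p : H × H => (p.1, c⁻¹ • p.2)) ⁻¹' D.graph := by
    ext ⟨x, y⟩
    simp only [Set.mem_preimage, SetLike.mem_coe, mem_graph_iff, smul_apply]
    constructor
    · rintro ⟨z, rfl, rfl⟩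
      exact ⟨z, rfl, by rw [inv_smul_smul₀ hc]⟩
    · rintro ⟨z, rfl, hz⟩
      exact ⟨z, rfl, by rw [hz, smul_inv_smul₀ hc]⟩
  rw [LinearPMap.IsClosed, hgraph]
  exact hD.preimage (by fun_prop)

def commutator (D : H →ₗ.[𝕜] H) (A : H →L[𝕜] H) (hA : ∀ x ∈ D.domain, A x ∈ D.domain) :
    D.domain →ₗ[𝕜] H :=
  D.toFun ∘ₗ (A : H →ₗ[𝕜] H).restrict hA - (A : H →ₗ[𝕜] H) ∘ₗ D.toFun

theorem commutator_apply (D : H →ₗ.[𝕜] H) (A : H →L[𝕜] H)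
    (hA : ∀ x ∈ D.domain, A x ∈ D.domain) (x : D.domain) :
    D.commutator A hA x = D ⟨A x, hA x x.2⟩ - A (D x) :=
  rfl

theorem commutator_comp_apply (D : H →ₗ.[𝕜] H) {A B : H →L[𝕜] H}
    (hA : ∀ x ∈ D.domain, A x ∈ D.domain) (hB : ∀ x ∈ D.domain, B x ∈ D.domain)
    (hAB : ∀ x ∈ D.domain, (A ∘L B) x ∈ D.domain) (x : D.domain) :
    D.commutator (A ∘L B) hAB x =
      D.commutator A hA ⟨B x, hB x x.2⟩ + A (D.commutator B hB x) := by
  simp only [commutator_apply, ContinuousLinearMap.comp_apply, _root_.map_sub]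
  abel

theorem norm_commutator_comp_le {D : H →ₗ.[𝕜] H} {A B : H →L[𝕜] H}
    {hA : ∀ x ∈ D.domain, A x ∈ D.domain} {hB : ∀ x ∈ D.domain, B x ∈ D.domain}
    (hAB : ∀ x ∈ D.domain, (A ∘L B) x ∈ D.domain) {a b : ℝ} (ha₀ : 0 ≤ a)
    (ha : ∀ x, ‖D.commutator A hA x‖ ≤ a * ‖(x : H)‖)
    (hb : ∀ x, ‖D.commutator B hB x‖ ≤ b * ‖(x : H)‖) (x : D.domain) :
    ‖D.commutator (A ∘L B) hAB x‖ ≤ (a * ‖B‖ + ‖A‖ * b) * ‖(x : H)‖ := by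
  rw [commutator_comp_apply D hA hB]
  calc _ ≤ ‖D.commutator A hA ⟨B x, hB x x.2⟩‖ + ‖A (D.commutator B hB x)‖ := norm_add_le _ _
    _ ≤ a * ‖B x‖ + ‖A‖ * (b * ‖(x : H)‖) := add_le_add (ha _) (A.le_opNorm_of_le (hb x))
    _ ≤ a * (‖B‖ * ‖(x : H)‖) + ‖A‖ * (b * ‖(x : H)‖) := by gcongr; exact B.le_opNorm x
    _ = (a * ‖B‖ + ‖A‖ * b) * ‖(x : H)‖ := by ring

theorem smul_commutator_apply (D : H →ₗ.[𝕜] H) (c : 𝕜) (A : H →L[𝕜] H)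
    (hA : ∀ x ∈ D.domain, A x ∈ D.domain) (x : D.domain) :
    (c • D).commutator A hA x = c • D.commutator A hA x := by
  simp only [commutator_apply, smul_apply, ContinuousLinearMap.map_smul, smul_sub]

def graphMap (D : H →ₗ.[𝕜] H) : D.domain →ₗ[𝕜] H × H :=
  D.domain.subtype.prod D.toFun

theorem graphMap_apply (D : H →ₗ.[𝕜] H) (x : D.domain) : D.graphMap x = ((x : H), D x) :=
  rfl

theorem graphMap_mem_graph (D : H →ₗ.[𝕜] H) (x : D.domain) : D.graphMap x ∈ D.graph :=
  D.mem_graph x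

theorem exists_graphMap_eq_of_mem_graph {D : H →ₗ.[𝕜] H} {p : H × H} (hp : p ∈ D.graph) :
    ∃ x : D.domain, D.graphMap x = p := by
  obtain ⟨x, hx₁, hx₂⟩ := D.mem_graph_iff.mp hp
  exact ⟨x, Prod.ext hx₁ hx₂⟩

theorem isClosed_graph_comp {D : H →ₗ.[𝕜] H} (hD : D.IsClosed) {T : H →L[𝕜] H}
    (hTdom : ∀ x ∈ D.domain, T x ∈ D.domain) (hTdom_rev : ∀ x, T x ∈ D.domain → x ∈ D.domain) :
    _root_.IsClosed {p : H × H | ∃ h : p.1 ∈ D.domain, p.2 = D ⟨T p.1, hTdom p.1 h⟩} := by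
  have hset : {p : H × H | ∃ h : p.1 ∈ D.domain, p.2 = D ⟨T p.1, hTdom p.1 h⟩} =
      (fun p : H × H => (T p.1, p.2)) ⁻¹' D.graph := by
    ext p
    constructor
    · rintro ⟨hp, hp₂⟩
      show (T p.1, p.2) ∈ D.graph
      rw [hp₂]
      exact D.mem_graph ⟨T p.1, hTdom p.1 hp⟩
    · intro h
      have hp := hTdom_rev p.1 (D.mem_domain_of_mem_graph h)
      exact ⟨hp, (D.image_iff (hTdom p.1 hp)).mpr h⟩
  rw [hset]
  exact hD.preimage (by fun_prop)

section Coercive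

variable {D : H →ₗ.[𝕜] H} {S : H →L[𝕜] H} {hS : ∀ x ∈ D.domain, S x ∈ D.domain} {ε C : ℝ}

theorem sub_mul_norm_sq_add_norm_apply_sq_le (hC : 0 ≤ C) (hcoer : ∀ x, ε * ‖x‖ ^ 2 ≤ re ⟪S x, x⟫_𝕜)
    (hcomm : ∀ x, ‖D.commutator S hS x‖ ≤ C * ‖(x : H)‖) (x : D.domain) :
    (2 * ε - C) * (‖(x : H)‖ ^ 2 + ‖D x‖ ^ 2) ≤
      2 * re (⟪S x, x⟫_𝕜 + ⟪D ⟨S x, hS x x.2⟩, D x⟫_𝕜) := by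
  have hsplit : D ⟨S x, hS x x.2⟩ = S (D x) + D.commutator S hS x := by
    rw [commutator_apply]
    abel
  have hcross : |re ⟪D.commutator S hS x, D x⟫_𝕜| ≤ C * ‖(x : H)‖ * ‖D x‖ :=
    calc |re ⟪D.commutator S hS x, D x⟫_𝕜| ≤ ‖D.commutator S hS x‖ * ‖D x‖ :=
          (abs_re_le_norm _).trans (norm_inner_le_norm _ _)
      _ ≤ C * ‖(x : H)‖ * ‖D x‖ := mul_le_mul_of_nonneg_right (hcomm x) (norm_nonneg _)
  rw [hsplit, inner_add_left, _root_.map_add, _root_.map_add]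
  nlinarith [hcoer x, hcoer (D x), abs_le.mp hcross,
    mul_nonneg hC (sq_nonneg (‖(x : H)‖ - ‖D x‖))]

theorem graphMap_eq_zero_of_inner_eq_zero (hC : 0 ≤ C) (hCε : C < 2 * ε)
    (hcoer : ∀ x, ε * ‖x‖ ^ 2 ≤ re ⟪S x, x⟫_𝕜)
    (hcomm : ∀ x, ‖D.commutator S hS x‖ ≤ C * ‖(x : H)‖) {x : D.domain}
    (hx : ⟪S x, (x : H)⟫_𝕜 + ⟪D ⟨S x, hS x x.2⟩, D x⟫_𝕜 = 0) : D.graphMap x = 0 := by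
  have hbound := sub_mul_norm_sq_add_norm_apply_sq_le hC hcoer hcomm x
  rw [hx, _root_.map_zero, mul_zero] at hbound
  have hsq : ‖(x : H)‖ ^ 2 + ‖D x‖ ^ 2 ≤ 0 := nonpos_of_mul_nonpos_right hbound (by linarith)
  have hx₀ : (x : H) = 0 := by
    rw [← norm_eq_zero]
    nlinarith [sq_nonneg ‖D x‖]
  have hDx₀ : D x = 0 := by
    rw [← norm_eq_zero]
    nlinarith [sq_nonneg ‖(x : H)‖]
  rw [graphMap_apply, hx₀, hDx₀, Prod.mk_zero_zero]

theorem norm_graphMap_le (hε : 0 < ε) (hC : 0 ≤ C) (hcoer : ∀ x, ε * ‖x‖ ^ 2 ≤ re ⟪S x, x⟫_𝕜)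
    (hcomm : ∀ x, ‖D.commutator S hS x‖ ≤ C * ‖(x : H)‖) (x : D.domain) :
    ‖D.graphMap x‖ ≤ ε⁻¹ * (1 + C * ε⁻¹) * ‖D.graphMap ((S : H →ₗ[𝕜] H).restrict hS x)‖ := by
  set m := ‖D.graphMap ((S : H →ₗ[𝕜] H).restrict hS x)‖
  have hSx : ‖S x‖ ≤ m := norm_fst_le (D.graphMap ((S : H →ₗ[𝕜] H).restrict hS x))
  have hDSx : ‖D ⟨S x, hS x x.2⟩‖ ≤ m :=
    norm_snd_le (D.graphMap ((S : H →ₗ[𝕜] H).restrict hS x))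
  have hx : ‖(x : H)‖ ≤ ε⁻¹ * m := by
    rw [le_inv_mul_iff₀ hε]
    exact (S.mul_norm_le_norm_apply hcoer x).trans hSx
  have hDx : ‖D x‖ ≤ ε⁻¹ * (m + C * (ε⁻¹ * m)) := by
    rw [le_inv_mul_iff₀ hε]
    calc ε * ‖D x‖ ≤ ‖S (D x)‖ := S.mul_norm_le_norm_apply hcoer _
      _ = ‖D ⟨S x, hS x x.2⟩ - D.commutator S hS x‖ := by rw [commutator_apply, sub_sub_cancel]
      _ ≤ ‖D ⟨S x, hS x x.2⟩‖ + ‖D.commutator S hS x‖ := norm_sub_le _ _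
      _ ≤ m + C * (ε⁻¹ * m) := add_le_add hDSx ((hcomm x).trans (by gcongr))
  have hm : 0 ≤ ε⁻¹ * (C * ε⁻¹ * m) := by positivity
  refine norm_prod_le_iff.mpr ⟨hx.trans ?_, hDx.trans (le_of_eq (by ring))⟩
  nlinarith

variable [CompleteSpace H]

theorem isClosed_range_graphMap_comp_restrict (hD : D.IsClosed) (hε : 0 < ε) (hC : 0 ≤ C)
    (hcoer : ∀ x, ε * ‖x‖ ^ 2 ≤ re ⟪S x, x⟫_𝕜)
    (hcomm : ∀ x, ‖D.commutator S hS x‖ ≤ C * ‖(x : H)‖) :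
    _root_.IsClosed
      (LinearMap.range (D.graphMap ∘ₗ (S : H →ₗ[𝕜] H).restrict hS) : Set (H × H)) := by
  refine IsSeqClosed.isClosed fun {f p} hf hp => ?_
  choose x hx using hf
  obtain rfl : f = fun n => D.graphMap ((S : H →ₗ[𝕜] H).restrict hS (x n)) :=
    funext fun n => (hx n).symm
  obtain ⟨z, rfl⟩ := exists_graphMap_eq_of_mem_graph <|
    hD.isSeqClosed (fun n => D.graphMap_mem_graph _) hp
  have hcauchy : CauchySeq fun n => D.graphMap (x n) := by
    refine cauchySeq_of_dist_le_mul (K := ε⁻¹ * (1 + C * ε⁻¹)) (fun m n => ?_) hp.cauchySeq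
    simp only [dist_eq_norm, ← _root_.map_sub]
    exact norm_graphMap_le hε hC hcoer hcomm _
  obtain ⟨q, hq⟩ := cauchySeq_tendsto_of_complete hcauchy
  obtain ⟨y, rfl⟩ := exists_graphMap_eq_of_mem_graph <|
    hD.isSeqClosed (fun n => D.graphMap_mem_graph (x n)) hq
  have hSy : S y = z := tendsto_nhds_unique
    ((S.continuous.tendsto _).comp ((continuous_fst.tendsto _).comp hq))
    ((continuous_fst.tendsto _).comp hp)
  exact ⟨y, congrArg D.graphMap (Subtype.ext hSy)⟩

theorem domain_le_map_of_commutator_lt (hD : D.IsClosed) (hC : 0 ≤ C) (hCε : C < 2 * ε)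
    (hcoer : ∀ x, ε * ‖x‖ ^ 2 ≤ re ⟪S x, x⟫_𝕜)
    (hcomm : ∀ x, ‖D.commutator S hS x‖ ≤ C * ‖(x : H)‖) :
    D.domain ≤ D.domain.map (S : H →ₗ[𝕜] H) := by
  let e := (WithLp.linearEquiv 2 𝕜 (H × H)).toLinearMap
  let Γ := D.graph.comap e
  let V := (LinearMap.range (D.graphMap ∘ₗ (S : H →ₗ[𝕜] H).restrict hS)).comap e
  have hVΓ : V ≤ Γ := by
    rintro w ⟨y, hy⟩
    show e w ∈ D.graph
    rw [← hy]
    exact D.graphMap_mem_graph _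
  have : CompleteSpace V :=
    ((isClosed_range_graphMap_comp_restrict hD (by linarith) hC hcoer hcomm).preimage
      (WithLp.prod_continuous_ofLp 2 H H)).completeSpace_coe
  have hinf : Vᗮ ⊓ Γ = ⊥ := by
    refine (Submodule.eq_bot_iff _).mpr fun w ⟨hwV, hwΓ⟩ => ?_
    obtain ⟨χ, hχ⟩ := exists_graphMap_eq_of_mem_graph hwΓ
    obtain rfl : w = WithLp.toLp 2 (D.graphMap χ) := by rw [hχ]; rfl
    have horth := (Submodule.mem_orthogonal _ _).mp hwV
      (WithLp.toLp 2 (D.graphMap ((S : H →ₗ[𝕜] H).restrict hS χ))) ⟨χ, rfl⟩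
    rw [WithLp.prod_inner_apply] at horth
    rw [graphMap_eq_zero_of_inner_eq_zero hC hCε hcoer hcomm horth]
    rfl
  have hV : V = Γ := by
    rw [← Submodule.sup_orthogonal_inf_of_hasOrthogonalProjection hVΓ, hinf, sup_bot_eq]
  intro χ hχ
  obtain ⟨y, hy⟩ : WithLp.toLp 2 (D.graphMap ⟨χ, hχ⟩) ∈ V := hV ▸ D.graphMap_mem_graph _
  exact ⟨y, y.2, congrArg Prod.fst hy⟩

theorem domain_le_map_of_commutator_le (hD : D.IsClosed) (hε : 0 < ε) (hC : 0 ≤ C)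
    (hcoer : ∀ x, ε * ‖x‖ ^ 2 ≤ re ⟪S x, x⟫_𝕜)
    (hcomm : ∀ x, ‖D.commutator S hS x‖ ≤ C * ‖(x : H)‖) :
    D.domain ≤ D.domain.map (S : H →ₗ[𝕜] H) := by
  -- `c • D` has the same domain and the commutator bound `c * C < ε`.
  set c : ℝ := ε / (C + 1)
  have hc : 0 < c := by positivity
  have hcC : c * C < 2 * ε := by
    have : c * C < ε := by
      rw [div_mul_eq_mul_div, div_lt_iff₀ (by positivity)]
      nlinarith
    linarith
  refine domain_le_map_of_commutator_lt (D := (c : 𝕜) • D) (hS := hS)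
    (hD.smul (ofReal_ne_zero.mpr hc.ne')) (by positivity) hcC hcoer fun x => ?_
  rw [smul_commutator_apply, norm_smul, norm_ofReal, abs_of_pos hc, mul_assoc]
  exact mul_le_mul_of_nonneg_left (hcomm x) hc.le

end Coercive

end LinearPMap

theorem domain_DT_eq_and_closed_general
    {H : Type*} [NormedAddCommGroup H] [InnerProductSpace ℂ H] [CompleteSpace H]
    (D : H →ₗ.[ℂ] H) (hsa : IsSelfAdjoint D)
    (T Tinv : H →L[ℂ] H) (hTsa : IsSelfAdjoint T)
    (hTinv₁ : Tinv.comp T = ContinuousLinearMap.id ℂ H)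
    (hTdom : ∀ x ∈ D.domain, T x ∈ D.domain)
    (hcomm : ∃ C : ℝ, 0 ≤ C ∧
      ∀ ψ : D.domain, ‖D ⟨T ψ, hTdom ψ ψ.2⟩ - T (D ψ)‖ ≤ C * ‖(ψ : H)‖) :
    {ψ : H | T ψ ∈ D.domain} = (D.domain : Set H) ∧
      IsClosed {p : H × H | ∃ h : p.1 ∈ D.domain, p.2 = D ⟨T p.1, hTdom p.1 h⟩} := by
  obtain ⟨C, hC, hcomm⟩ := hcomm
  have hTinvT (x : H) : Tinv (T x) = x := by simpa using DFunLike.congr_fun hTinv₁ x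
  -- `+ 1` keeps the constant positive also when `H = 0`, where `‖Tinv‖ = 0`.
  have hTbelow (x : H) : ‖x‖ ≤ (‖Tinv‖ + 1) * ‖T x‖ :=
    calc ‖x‖ = ‖Tinv (T x)‖ := by rw [hTinvT]
      _ ≤ ‖Tinv‖ * ‖T x‖ := Tinv.le_opNorm _
      _ ≤ (‖Tinv‖ + 1) * ‖T x‖ := by gcongr; linarith
  have hTT : ∀ x ∈ D.domain, (T ∘L T) x ∈ D.domain := fun x hx => hTdom _ (hTdom x hx)
  have hdom_le : D.domain ≤ D.domain.map (T ∘L T : H →ₗ[ℂ] H) :=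
    LinearPMap.domain_le_map_of_commutator_le hsa.isClosed (by positivity) (by positivity)
      (ContinuousLinearMap.inv_sq_mul_norm_sq_le_re_inner_comp_self hTsa (by positivity) hTbelow)
      (LinearPMap.norm_commutator_comp_le (hA := hTdom) (hB := hTdom) hTT hC hcomm hcomm)
  have hdom (ψ : H) (hψ : T ψ ∈ D.domain) : ψ ∈ D.domain := by
    obtain ⟨x, hx, hxψ⟩ := hdom_le hψ
    have hTx : T x = ψ := by simpa [hTinvT] using congrArg Tinv hxψ
    exact hTx ▸ hTdom x hx
  exact ⟨Set.ext fun ψ => ⟨hdom ψ, hTdom ψ⟩,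
    LinearPMap.isClosed_graph_comp hsa.isClosed hTdom hdom⟩

/-- Let `D` be a densely defined self-adjoint operator on a complex Hilbert
space `H`, and `T` a bounded self-adjoint invertible operator with `T (Dom D) ⊆ Dom D` and
bounded commutator `[D, T]` on `Dom D`.  Then the maximal domain
`{ψ : T ψ ∈ Dom D}` of `DT` equals `Dom D`, and the operator `ψ ↦ D (T ψ)` with domain
`Dom D` is closed (its graph is closed in `H × H`). -/
theorem domain_DT_eq_and_closed
    {H : Type*} [NormedAddCommGroup H] [InnerProductSpace ℂ H] [CompleteSpace H]
    (D : H →ₗ.[ℂ] H) (hdense : Dense (D.domain : Set H)) (hsa : IsSelfAdjoint D)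
    (T Tinv : H →L[ℂ] H) (hTsa : IsSelfAdjoint T)
    (hTinv₁ : Tinv.comp T = ContinuousLinearMap.id ℂ H)
    (hTinv₂ : T.comp Tinv = ContinuousLinearMap.id ℂ H)
    (hTdom : ∀ x ∈ D.domain, T x ∈ D.domain)
    (hcomm : ∃ C : ℝ, 0 ≤ C ∧
      ∀ ψ : D.domain, ‖D ⟨T ψ, hTdom ψ ψ.2⟩ - T (D ψ)‖ ≤ C * ‖(ψ : H)‖) :
    {ψ : H | T ψ ∈ D.domain} = (D.domain : Set H) ∧
      IsClosed {p : H × H | ∃ h : p.1 ∈ D.domain, p.2 = D ⟨T p.1, hTdom p.1 h⟩} :=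
  domain_DT_eq_and_closed_general D hsa T Tinv hTsa hTinv₁ hTdom hcomm
end

section
/- Under the stated hypotheses, the operator TDT, i.e. ψ ↦ T(D(Tψ)), with domain Dom D, is self-adjoint on H. -/
/-- The operator `ψ ↦ T (D (T ψ))` with domain `Dom D`, for a partially defined operator `D`
and a bounded operator `T` mapping `Dom D` into itself. -/
def sandwichPMap {H : Type*} [NormedAddCommGroup H] [InnerProductSpace ℂ H]
    (D : H →ₗ.[ℂ] H) (T : H →L[ℂ] H)
    (hTdom : ∀ x ∈ D.domain, T x ∈ D.domain) : H →ₗ.[ℂ] H where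
  domain := D.domain
  toFun :=
    { toFun := fun ψ => T (D ⟨T ψ, hTdom ψ ψ.2⟩)
      map_add' := by
        intro x y
        have h : (⟨T ↑(x + y), hTdom _ (x + y).2⟩ : D.domain)
            = ⟨T ↑x, hTdom _ x.2⟩ + ⟨T ↑y, hTdom _ y.2⟩ := by
          apply Subtype.ext
          simp [map_add]
        try dsimp only
        rw [h, D.map_add, map_add]
      map_smul' := by
        intro c x
        have h : (⟨T ↑(c • x), hTdom _ (c • x).2⟩ : D.domain)
            = c • ⟨T ↑x, hTdom _ x.2⟩ := by
          apply Subtype.ext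
          simp [map_smul]
        try dsimp only
        rw [h, D.map_smul, map_smul]
        rfl }

/-!
Since `D` is self-adjoint, `D + iμ` maps `Dom D` onto `H` for every real `μ ≠ 0`, with
`‖(D + iμ) x‖ ≥ |μ| ‖x‖`. For `y ∈ Dom D`, solve `(D + iμ) z = T⁻¹ ((D + iμ) y - B (T⁻¹ y))`,
where `B` is the bounded extension of `[D, T]` to all of `H` (needed since `T⁻¹ y` need not lie
in `Dom D`). Then `u = T z - y` satisfies `(D + iμ) u = B (T⁻¹ u)`, which forces `u = 0` once
`|μ| > ‖B‖ ‖T⁻¹‖`; so `T⁻¹ y = z ∈ Dom D`. Now `TDT` is symmetric, and for `φ` in the domain of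
its adjoint, testing against the vectors `T⁻¹ χ` gives `D (T φ) = T⁻¹ ((TDT)† φ)`, hence
`φ ∈ Dom D` and `(TDT)† φ = TDT φ`.
-/
open scoped NNReal InnerProductSpace
open Complex (I)

namespace LinearPMap

section ClosedRange

variable {𝕜 E F : Type*} [NontriviallyNormedField 𝕜] [NormedAddCommGroup E] [NormedSpace 𝕜 E]
  [NormedAddCommGroup F] [NormedSpace 𝕜 F]

theorem IsClosed.vadd {f : E →ₗ.[𝕜] F} (hf : f.IsClosed) {g : E →ₗ[𝕜] F} (hg : Continuous g) :
    (g +ᵥ f).IsClosed := by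
  have hgraph : ((g +ᵥ f).graph : Set (E × F)) = (fun p => (p.1, p.2 - g p.1)) ⁻¹' f.graph := by
    ext ⟨x, y⟩
    simp only [SetLike.mem_coe, mem_graph_iff, Set.mem_preimage, vadd_apply]
    constructor
    · rintro ⟨z, rfl, rfl⟩
      exact ⟨z, rfl, by simp⟩
    · rintro ⟨z, rfl, hz⟩
      exact ⟨z, rfl, by rw [hz]; abel⟩
  rw [LinearPMap.IsClosed, hgraph]
  exact hf.preimage (by fun_prop)

theorem IsClosed.isClosed_range [CompleteSpace E] [CompleteSpace F] {f : E →ₗ.[𝕜] F}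
    (hf : f.IsClosed) {K : ℝ≥0} (hK : ∀ x : f.domain, ‖(x : E)‖ ≤ K * ‖f x‖) :
    _root_.IsClosed (Set.range f) := by
  have : CompleteSpace f.graph := hf.isComplete.completeSpace_coe
  let G : f.graph →L[𝕜] F := (ContinuousLinearMap.snd 𝕜 E F).comp f.graph.subtypeL
  have hG : ∀ p : f.graph, ∃ x : f.domain, (p : E × F) = ((x : E), f x) := fun p => by
    obtain ⟨x, hx⟩ := (mem_graph_iff' f).1 p.2
    exact ⟨x, hx.symm⟩
  have hrange : Set.range G = Set.range f := by
    ext y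
    constructor
    · rintro ⟨p, rfl⟩
      obtain ⟨x, hx⟩ := hG p
      exact ⟨x, by simp [G, hx]⟩
    · rintro ⟨x, rfl⟩
      exact ⟨⟨_, f.mem_graph x⟩, rfl⟩
  have hanti : AntilipschitzWith (max K 1) G := G.antilipschitz_of_bound fun p => by
    obtain ⟨x, hx⟩ := hG p
    have hGp : G p = f x := by simp [G, hx]
    rw [hGp, ← Submodule.norm_coe, hx, Prod.norm_mk, NNReal.coe_max, NNReal.coe_one]
    exact max_le ((hK x).trans (by gcongr; exact le_max_left _ _))
      (le_mul_of_one_le_left (norm_nonneg _) (le_max_right _ _))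
  rw [← hrange]
  exact hanti.isClosed_range G.uniformContinuous

end ClosedRange

section SelfAdjoint

variable {𝕜 E : Type*} [RCLike 𝕜] [NormedAddCommGroup E] [InnerProductSpace 𝕜 E] [CompleteSpace E]
  {A : E →ₗ.[𝕜] E}

theorem _root_.IsSelfAdjoint.isFormalAdjoint (hA : IsSelfAdjoint A) : A.IsFormalAdjoint A := by
  have h := LinearPMap.adjoint_isFormalAdjoint hA.dense_domain
  rwa [isSelfAdjoint_def.mp hA] at h

theorem _root_.IsSelfAdjoint.exists_apply_eq_of_inner (hA : IsSelfAdjoint A) {y w : E}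
    (h : ∀ x : A.domain, ⟪w, (x : E)⟫_𝕜 = ⟪y, A x⟫_𝕜) : ∃ hy : y ∈ A.domain, A ⟨y, hy⟩ = w := by
  have hy : y ∈ A†.domain := mem_adjoint_domain_of_exists y ⟨w, h⟩
  have key : ∃ hy : y ∈ A†.domain, A† ⟨y, hy⟩ = w :=
    ⟨hy, adjoint_apply_eq hA.dense_domain ⟨y, hy⟩ h⟩
  rwa [isSelfAdjoint_def.mp hA] at key

end SelfAdjoint

section Complex

variable {H : Type*} [NormedAddCommGroup H] [InnerProductSpace ℂ H] {A : H →ₗ.[ℂ] H}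

theorem IsFormalAdjoint.norm_add_smul_I_sq (hA : A.IsFormalAdjoint A) (μ : ℝ) (x : A.domain) :
    ‖A x + (μ * I : ℂ) • (x : H)‖ ^ 2 = ‖A x‖ ^ 2 + (μ * ‖(x : H)‖) ^ 2 := by
  have him : (⟪A x, (x : H)⟫_ℂ).im = 0 := by
    rw [← Complex.conj_eq_iff_im, inner_conj_symm]
    exact (hA x x).symm
  have hre : RCLike.re ⟪A x, (μ * I : ℂ) • (x : H)⟫_ℂ = 0 := by
    simp [him]
  rw [norm_add_sq (𝕜 := ℂ), hre, norm_smul]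
  simp only [mul_zero, add_zero, Complex.norm_mul, Complex.norm_real, Real.norm_eq_abs,
    Complex.norm_I, mul_one, mul_pow, sq_abs]

theorem IsFormalAdjoint.abs_mul_norm_le (hA : A.IsFormalAdjoint A) (μ : ℝ) (x : A.domain) :
    |μ| * ‖(x : H)‖ ≤ ‖A x + (μ * I : ℂ) • (x : H)‖ := by
  rw [← sq_le_sq₀ (by positivity) (norm_nonneg _), hA.norm_add_smul_I_sq, mul_pow, mul_pow, sq_abs]
  exact le_add_of_nonneg_left (sq_nonneg ‖A x‖)

theorem _root_.IsSelfAdjoint.exists_add_smul_I_eq [CompleteSpace H] (hA : IsSelfAdjoint A)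
    {μ : ℝ} (hμ : μ ≠ 0) (z : H) : ∃ x : A.domain, A x + (μ * I : ℂ) • (x : H) = z := by
  set c : ℂ := μ * I
  let B : H →ₗ.[ℂ] H := (c • LinearMap.id : H →ₗ[ℂ] H) +ᵥ A
  have hB : ∀ x : A.domain, B x = A x + c • (x : H) := fun x => add_comm _ _
  have hclosed : _root_.IsClosed (LinearMap.range B.toFun : Set H) := by
    have hK : ∀ x : B.domain, ‖(x : H)‖ ≤ (⟨|μ|⁻¹, by positivity⟩ : ℝ≥0) * ‖B x‖ := fun x => by
      show ‖(x : H)‖ ≤ |μ|⁻¹ * ‖B x‖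
      rw [le_inv_mul_iff₀ (abs_pos.2 hμ), hB]
      exact hA.isFormalAdjoint.abs_mul_norm_le μ x
    exact (hA.isClosed.vadd (continuous_const_smul c)).isClosed_range hK
  -- A vector orthogonal to the range is an eigenvector of `A` with eigenvalue `c`,
  -- which the lower bound for `-μ` rules out.
  have hperp : (LinearMap.range B.toFun)ᗮ = ⊥ := by
    refine (Submodule.eq_bot_iff _).2 fun y hy => ?_
    obtain ⟨hy', hAy⟩ : ∃ hy' : y ∈ A.domain, A ⟨y, hy'⟩ = c • y := by
      refine hA.exists_apply_eq_of_inner fun x => ?_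
      have h := (Submodule.mem_orthogonal _ _).1 hy (B x) ⟨x, rfl⟩
      rw [hB, inner_add_left, inner_smul_left] at h
      rw [inner_smul_left, ← inner_conj_symm y (A x), ← inner_conj_symm y (x : H),
        eq_neg_of_add_eq_zero_left h]
      simp [c]
    have h := hA.isFormalAdjoint.abs_mul_norm_le (-μ) ⟨y, hy'⟩
    rw [hAy, ← add_smul] at h
    simp only [abs_neg, Complex.ofReal_neg, neg_mul, add_neg_cancel, zero_smul, norm_zero, c] at h
    exact norm_le_zero_iff.1 (nonpos_of_mul_nonpos_right h (abs_pos.2 hμ))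
  have : CompleteSpace (LinearMap.range B.toFun) := hclosed.isComplete.completeSpace_coe
  obtain ⟨x, hx⟩ := LinearMap.mem_range.1
    ((Submodule.orthogonal_eq_bot_iff.1 hperp).symm ▸ Submodule.mem_top : z ∈ _)
  exact ⟨x, (hB x).symm.trans hx⟩

end Complex

section Commutator

variable {𝕜 E : Type*} [NontriviallyNormedField 𝕜] [NormedAddCommGroup E] [NormedSpace 𝕜 E]
  [CompleteSpace E]

theorem exists_commutator_extension (D : E →ₗ.[𝕜] E) (hD : Dense (D.domain : Set E))
    {T : E →L[𝕜] E} (hT : ∀ x ∈ D.domain, T x ∈ D.domain) {C : ℝ}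
    (hC : ∀ x : D.domain, ‖D ⟨T x, hT x x.2⟩ - T (D x)‖ ≤ C * ‖(x : E)‖) :
    ∃ B : E →L[𝕜] E, (∀ x : D.domain, B x = D ⟨T x, hT x x.2⟩ - T (D x)) ∧
      ∀ x, ‖B x‖ ≤ C * ‖x‖ := by
  let K : D.domain →ₗ[𝕜] E :=
    D.toFun ∘ₗ (T : E →ₗ[𝕜] E).restrict hT - (T : E →ₗ[𝕜] E) ∘ₗ D.toFun
  have hdense : DenseRange D.domain.subtype := by simpa using hD
  exact ⟨K.extendOfNorm D.domain.subtype, LinearMap.extendOfNorm_eq hdense ⟨C, hC⟩,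
    LinearMap.norm_extendOfNorm_apply_le hdense C hC⟩

end Commutator

end LinearPMap

open scoped LinearPMap

section Sandwich

variable {H : Type*} [NormedAddCommGroup H] [InnerProductSpace ℂ H] {D : H →ₗ.[ℂ] H}
  {T Tinv : H →L[ℂ] H}

theorem IsSelfAdjoint.inverse_apply_mem_domain [CompleteSpace H] (hD : IsSelfAdjoint D)
    (hleft : Function.LeftInverse Tinv T) (hright : Function.RightInverse Tinv T)
    (hT : ∀ x ∈ D.domain, T x ∈ D.domain) {C : ℝ}
    (hC : ∀ x : D.domain, ‖D ⟨T x, hT x x.2⟩ - T (D x)‖ ≤ C * ‖(x : H)‖)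
    {y : H} (hy : y ∈ D.domain) : Tinv y ∈ D.domain := by
  obtain ⟨B, hB, hBC⟩ := LinearPMap.exists_commutator_extension D hD.dense_domain hT hC
  set μ : ℝ := |C| * ‖Tinv‖ + 1
  set c : ℂ := μ * I
  obtain ⟨z, hz⟩ := hD.exists_add_smul_I_eq (μ := μ) (by positivity)
    (Tinv (D ⟨y, hy⟩ + c • y - B (Tinv y)))
  let u : D.domain := ⟨T z, hT z z.2⟩ - ⟨y, hy⟩
  have hu : D u + c • (u : H) = B (Tinv u) := by
    have hTz : T (D z) + c • T z = D ⟨y, hy⟩ + c • y - B (Tinv y) := by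
      rw [← map_smul, ← map_add, hz, hright]
    have hDTz : D ⟨T z, hT z z.2⟩ = T (D z) + B z := by
      rw [hB]
      abel
    calc D u + c • (u : H) = D ⟨T z, hT z z.2⟩ - D ⟨y, hy⟩ + c • (T z - y) := by
          rw [LinearPMap.map_sub]
          rfl
      _ = B z - B (Tinv y) := by
          rw [hDTz]
          linear_combination (norm := module) hTz
      _ = B (Tinv u) := by
          simp [u, hleft z]
  have hu0 : (u : H) = 0 := by
    have hlow := hD.isFormalAdjoint.abs_mul_norm_le μ u
    have hup : ‖B (Tinv u)‖ ≤ |C| * (‖Tinv‖ * ‖(u : H)‖) :=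
      calc ‖B (Tinv u)‖ ≤ C * ‖Tinv u‖ := hBC _
        _ ≤ |C| * (‖Tinv‖ * ‖(u : H)‖) :=
          mul_le_mul (le_abs_self C) (Tinv.le_opNorm _) (norm_nonneg _) (abs_nonneg C)
    rw [hu, abs_of_pos (by positivity)] at hlow
    exact norm_le_zero_iff.1 (by linarith)
  have hTz : T z = y := sub_eq_zero.1 hu0
  rw [← hTz, hleft]
  exact z.2

theorem sandwichPMap_isFormalAdjoint (hD : D.IsFormalAdjoint D)
    (hT : (T : H →ₗ[ℂ] H).IsSymmetric) (hTdom : ∀ x ∈ D.domain, T x ∈ D.domain) :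
    (sandwichPMap D T hTdom).IsFormalAdjoint (sandwichPMap D T hTdom) := fun x y =>
  (hT _ _).trans ((hD ⟨T x, hTdom x x.2⟩ ⟨T y, hTdom y y.2⟩).trans (hT _ _))

theorem adjoint_sandwichPMap_le [CompleteSpace H] (hD : IsSelfAdjoint D)
    (hT : (T : H →ₗ[ℂ] H).IsSymmetric)
    (hleft : Function.LeftInverse Tinv T) (hright : Function.RightInverse Tinv T)
    (hTdom : ∀ x ∈ D.domain, T x ∈ D.domain) (hTinvdom : ∀ x ∈ D.domain, Tinv x ∈ D.domain) :
    (sandwichPMap D T hTdom)† ≤ sandwichPMap D T hTdom := by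
  set S := sandwichPMap D T hTdom
  have hTinv : ∀ x y : H, ⟪Tinv x, y⟫_ℂ = ⟪x, Tinv y⟫_ℂ := fun x y =>
    calc ⟪Tinv x, y⟫_ℂ = ⟪Tinv x, T (Tinv y)⟫_ℂ := by rw [hright]
      _ = ⟪T (Tinv x), Tinv y⟫_ℂ := (hT _ _).symm
      _ = ⟪x, Tinv y⟫_ℂ := by rw [hright]
  have key : ∀ φ : S†.domain, ∃ h : T φ ∈ D.domain, D ⟨T φ, h⟩ = Tinv (S† φ) := fun φ => by
    refine hD.exists_apply_eq_of_inner fun χ => ?_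
    have hχ : Tinv χ ∈ D.domain := hTinvdom χ χ.2
    have hSχ : S ⟨Tinv χ, hχ⟩ = T (D χ) := by
      have hTTinvχ : (⟨T (Tinv χ), hTdom _ hχ⟩ : D.domain) = χ := Subtype.ext (hright χ)
      change T (D ⟨T (Tinv χ), hTdom _ hχ⟩) = T (D χ)
      rw [hTTinvχ]
    calc ⟪Tinv (S† φ), (χ : H)⟫_ℂ = ⟪S† φ, Tinv χ⟫_ℂ := hTinv _ _
      _ = ⟪(φ : H), S ⟨Tinv χ, hχ⟩⟫_ℂ :=
          LinearPMap.adjoint_isFormalAdjoint (T := S) hD.dense_domain φ ⟨Tinv χ, hχ⟩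
      _ = ⟪T φ, D χ⟫_ℂ := by rw [hSχ]; exact (hT _ _).symm
  refine ⟨fun φ hφ => ?_, fun φ ψ hφψ => ?_⟩
  · obtain ⟨h, -⟩ := key ⟨φ, hφ⟩
    exact hleft φ ▸ hTinvdom _ h
  · obtain ⟨h, hφ⟩ := key φ
    calc S† φ = T (Tinv (S† φ)) := (hright _).symm
      _ = T (D ⟨T φ, h⟩) := by rw [hφ]
      _ = S ψ := by
        change _ = T (D ⟨T ψ, hTdom _ ψ.2⟩)
        simp only [hφψ]

end Sandwich

theorem sandwichPMap_isSelfAdjoint_general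
    {H : Type*} [NormedAddCommGroup H] [InnerProductSpace ℂ H] [CompleteSpace H]
    (D : H →ₗ.[ℂ] H) (hsa : IsSelfAdjoint D)
    (T Tinv : H →L[ℂ] H) (hTsa : IsSelfAdjoint T)
    (hTinv₁ : Tinv.comp T = ContinuousLinearMap.id ℂ H)
    (hTinv₂ : T.comp Tinv = ContinuousLinearMap.id ℂ H)
    (hTdom : ∀ x ∈ D.domain, T x ∈ D.domain)
    (hcomm : ∃ C : ℝ, 0 ≤ C ∧
      ∀ ψ : D.domain, ‖D ⟨T ψ, hTdom ψ ψ.2⟩ - T (D ψ)‖ ≤ C * ‖(ψ : H)‖) :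
    IsSelfAdjoint (sandwichPMap D T hTdom) := by
  have hleft : Function.LeftInverse Tinv T := ContinuousLinearMap.ext_iff.1 hTinv₁
  have hright : Function.RightInverse Tinv T := ContinuousLinearMap.ext_iff.1 hTinv₂
  obtain ⟨C, -, hC⟩ := hcomm
  have hTinvdom : ∀ x ∈ D.domain, Tinv x ∈ D.domain := fun _ hx =>
    hsa.inverse_apply_mem_domain hleft hright hTdom hC hx
  refine LinearPMap.isSelfAdjoint_def.2 (le_antisymm ?_ ?_)
  · exact adjoint_sandwichPMap_le hsa hTsa.isSymmetric hleft hright hTdom hTinvdom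
  · exact (sandwichPMap_isFormalAdjoint hsa.isFormalAdjoint hTsa.isSymmetric hTdom).le_adjoint
      hsa.dense_domain

/-- Let `D` be a densely defined self-adjoint operator on a complex Hilbert
space `H`, and `T` a bounded self-adjoint invertible operator with `T (Dom D) ⊆ Dom D` and
bounded commutator `[D, T]` on `Dom D`.  Then the operator `TDT : ψ ↦ T (D (T ψ))` with
domain `Dom D` is self-adjoint. -/
theorem sandwichPMap_isSelfAdjoint
    {H : Type*} [NormedAddCommGroup H] [InnerProductSpace ℂ H] [CompleteSpace H]
    (D : H →ₗ.[ℂ] H) (hdense : Dense (D.domain : Set H)) (hsa : IsSelfAdjoint D)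
    (T Tinv : H →L[ℂ] H) (hTsa : IsSelfAdjoint T)
    (hTinv₁ : Tinv.comp T = ContinuousLinearMap.id ℂ H)
    (hTinv₂ : T.comp Tinv = ContinuousLinearMap.id ℂ H)
    (hTdom : ∀ x ∈ D.domain, T x ∈ D.domain)
    (hcomm : ∃ C : ℝ, 0 ≤ C ∧
      ∀ ψ : D.domain, ‖D ⟨T ψ, hTdom ψ ψ.2⟩ - T (D ψ)‖ ≤ C * ‖(ψ : H)‖) :
    IsSelfAdjoint (sandwichPMap D T hTdom) :=
  sandwichPMap_isSelfAdjoint_general D hsa T Tinv hTsa hTinv₁ hTinv₂ hTdom hcomm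
end

section
/- Let {D_t}_{t∈ℝ} be a family of bounded operators D_t : W → H such that (i) for each t the unbounded operator on H with domain ι(W) sending ιξ to D_t ξ is self-adjoint, (ii) there exist C₁, C₂ > 0 with C₁‖ξ‖_W ≤ (‖ιξ‖_H² + ‖D_t ξ‖_H²)^{1/2} ≤ C₂‖ξ‖_W for all ξ ∈ W and t ∈ ℝ, and (iii) t ↦ D_t ∈ B(W,H) is continuous in the operator norm. Then for each t ∈ ℝ and each sign ±, the operator D_t ± i (with domain ι(W)) has a bounded everywhere-defined inverse R_t^± ∈ B(H) with ‖R_t^±‖ ≤ 1, and the resolvent maps t ↦ R_t^± ∈ B(H) are continuous in the operator norm. -/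
/-!
Self-adjointness of `T : ι ξ ↦ D ξ` makes `⟪D ξ, ι ξ⟫` real, so
`‖D ξ ± i • ι ξ‖² = ‖ι ξ‖² + ‖D ξ‖²`. By the lower graph-norm bound the maps `D ± i • ι : W → H`
are therefore bounded below, hence injective with closed range; a vector orthogonal to their range
lies in the domain of `T† = T`, i.e. in `ι(W)`, and is an eigenvector of `T` with eigenvalue `±i`,
hence zero. So `D ± i • ι` is an isomorphism `W ≃ H`, the resolvent is `ι ∘ (D ± i • ι)⁻¹`, of norm
at most `1` because `‖ι ξ‖ ≤ ‖D ξ ± i • ι ξ‖`, and it depends continuously on `t` because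
inversion is continuous on the isomorphisms between Banach spaces.
-/

/-- Given an injective bounded map `ι : W → H` with dense range and a bounded operator
`Dt : W → H`, the unbounded operator on `H` with domain `ι(W)` sending `ι ξ` to `Dt ξ`. -/
noncomputable def inducedPMap {W H : Type*} [NormedAddCommGroup W] [InnerProductSpace ℂ W]
    [NormedAddCommGroup H] [InnerProductSpace ℂ H]
    (ι : W →L[ℂ] H) (hinj : Function.Injective ι) (Dt : W →L[ℂ] H) : H →ₗ.[ℂ] H :=
  ⟨LinearMap.range ι.toLinearMap,
    Dt.toLinearMap ∘ₗ (LinearEquiv.ofInjective ι.toLinearMap hinj).symm.toLinearMap⟩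

open scoped InnerProductSpace ComplexConjugate LinearPMap NNReal

theorem AntilipschitzWith.isInvertible_of_denseRange
    {𝕜 E F : Type*} [NontriviallyNormedField 𝕜]
    [NormedAddCommGroup E] [NormedSpace 𝕜 E] [CompleteSpace E]
    [NormedAddCommGroup F] [NormedSpace 𝕜 F] [CompleteSpace F]
    {f : E →L[𝕜] F} {K : ℝ≥0} (hf : AntilipschitzWith K f) (hd : DenseRange f) :
    f.IsInvertible := by
  have hsurj : Function.Surjective f := by
    rw [← Set.range_eq_univ, ← (hf.isClosed_range f.uniformContinuous).closure_eq]
    exact hd.closure_range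
  exact ⟨.ofBijective f (LinearMap.ker_eq_bot.mpr hf.injective)
    (LinearMap.range_eq_top.mpr hsurj), rfl⟩

namespace inducedPMap

variable {W H : Type*} [NormedAddCommGroup W] [InnerProductSpace ℂ W]
    [NormedAddCommGroup H] [InnerProductSpace ℂ H]
    {ι : W →L[ℂ] H} {hinj : Function.Injective ι} {Dt : W →L[ℂ] H}

theorem mem_domain (ξ : W) : ι ξ ∈ (inducedPMap ι hinj Dt).domain := ⟨ξ, rfl⟩

theorem apply_mk (ξ : W) (h : ι ξ ∈ (inducedPMap ι hinj Dt).domain) :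
    inducedPMap ι hinj Dt ⟨ι ξ, h⟩ = Dt ξ := by
  show Dt ((LinearEquiv.ofInjective ι.toLinearMap hinj).symm ⟨ι ξ, h⟩) = Dt ξ
  have : (⟨ι ξ, h⟩ : LinearMap.range ι.toLinearMap) =
      LinearEquiv.ofInjective ι.toLinearMap hinj ξ := rfl
  rw [this, LinearEquiv.symm_apply_apply]

variable [CompleteSpace H] (hsa : IsSelfAdjoint (inducedPMap ι hinj Dt))
include hsa

theorem inner_map_comm (ξ η : W) : ⟪Dt ξ, ι η⟫_ℂ = ⟪ι ξ, Dt η⟫_ℂ := by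
  have h := LinearPMap.adjoint_isFormalAdjoint hsa.dense_domain
  rw [show (inducedPMap ι hinj Dt)† = inducedPMap ι hinj Dt from hsa] at h
  simpa only [apply_mk] using h ⟨ι ξ, mem_domain ξ⟩ ⟨ι η, mem_domain η⟩

theorem im_inner_map_self (ξ : W) : (⟪Dt ξ, ι ξ⟫_ℂ).im = 0 := by
  rw [← Complex.conj_eq_iff_im, inner_conj_symm, inner_map_comm hsa]

theorem exists_eq_of_forall_inner_eq {y w : H} (h : ∀ ξ : W, ⟪w, ι ξ⟫_ℂ = ⟪y, Dt ξ⟫_ℂ) :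
    ∃ η : W, ι η = y ∧ Dt η = w := by
  set T : H →ₗ.[ℂ] H := inducedPMap ι hinj Dt
  have hw : ∀ x : T.domain, ⟪w, (x : H)⟫_ℂ = ⟪y, T x⟫_ℂ := by
    rintro ⟨-, ξ, rfl⟩
    exact (apply_mk (Dt := Dt) ξ ⟨ξ, rfl⟩).symm ▸ h ξ
  have hy : y ∈ T†.domain := LinearPMap.mem_adjoint_domain_of_exists y ⟨w, hw⟩
  have hTy : T† ⟨y, hy⟩ = w := LinearPMap.adjoint_apply_eq hsa.dense_domain _ hw
  have hle : T† ≤ T := le_of_eq hsa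
  obtain ⟨η, hη⟩ := hle.1 hy
  refine ⟨η, hη, ?_⟩
  rw [← apply_mk η (mem_domain η), ← hTy]
  exact (hle.2 hη.symm).symm

theorem norm_add_smul_sq {ε : ℂ} (hε : ε.re = 0) (ξ : W) :
    ‖Dt ξ + ε • ι ξ‖ ^ 2 = ‖Dt ξ‖ ^ 2 + ‖ε‖ ^ 2 * ‖ι ξ‖ ^ 2 := by
  have hcross : RCLike.re (ε * ⟪Dt ξ, ι ξ⟫_ℂ) = 0 := by
    simp only [RCLike.re_to_complex, Complex.mul_re, hε, im_inner_map_self hsa]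
    ring
  rw [@norm_add_sq ℂ, inner_smul_right, hcross, norm_smul, mul_pow]
  ring

theorem denseRange_add_smul {ε : ℂ} (hε : ε.im ≠ 0) : DenseRange (Dt + ε • ι) := by
  suffices (Dt + ε • ι).rangeᗮ = ⊥ by
    rw [DenseRange, ← ContinuousLinearMap.coe_coe, ← LinearMap.coe_range,
      Submodule.dense_iff_topologicalClosure_eq_top, Submodule.topologicalClosure_eq_top_iff]
    exact this
  rw [Submodule.eq_bot_iff]
  intro y hy
  have horth (ξ : W) : ⟪y, Dt ξ⟫_ℂ + ε * ⟪y, ι ξ⟫_ℂ = 0 := by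
    rw [← inner_smul_right, ← inner_add_right]
    exact Submodule.inner_left_of_mem_orthogonal (LinearMap.mem_range_self _ ξ) hy
  -- `y ⊥ range (Dt + ε • ι)` says `T† y = -conj ε • y`; then `⟪T y, y⟫ = -ε ‖y‖²` must be real.
  obtain ⟨η, rfl, hη⟩ := exists_eq_of_forall_inner_eq hsa (w := -(conj ε) • y) fun ξ => by
    rw [inner_smul_left, map_neg, Complex.conj_conj]
    linear_combination -horth ξ
  have him := im_inner_map_self hsa η
  rw [hη, inner_smul_left, inner_self_eq_norm_sq_to_K] at him
  simpa [Complex.mul_im, ← Complex.ofReal_pow, hε] using him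

theorem norm_add_smul_eq {ε : ℂ} (hre : ε.re = 0) (hnorm : ‖ε‖ = 1) (ξ : W) :
    ‖Dt ξ + ε • ι ξ‖ = √(‖ι ξ‖ ^ 2 + ‖Dt ξ‖ ^ 2) := by
  rw [← Real.sqrt_sq (norm_nonneg (Dt ξ + ε • ι ξ)), norm_add_smul_sq hsa hre, hnorm]
  ring_nf

theorem norm_le_norm_add_smul {ε : ℂ} (hre : ε.re = 0) (hnorm : ‖ε‖ = 1) (ξ : W) :
    ‖ι ξ‖ ≤ ‖Dt ξ + ε • ι ξ‖ := by
  rw [norm_add_smul_eq hsa hre hnorm]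
  exact Real.le_sqrt_of_sq_le (le_add_of_nonneg_right (sq_nonneg _))

theorem isInvertible_add_smul [CompleteSpace W] {C : ℝ} (hC : 0 < C)
    (hlow : ∀ ξ : W, C * ‖ξ‖ ≤ √(‖ι ξ‖ ^ 2 + ‖Dt ξ‖ ^ 2))
    {ε : ℂ} (hre : ε.re = 0) (hnorm : ‖ε‖ = 1) : (Dt + ε • ι).IsInvertible := by
  have him : ε.im ≠ 0 := fun him => by
    simp [show ε = 0 from Complex.ext hre him] at hnorm
  have hanti : AntilipschitzWith ⟨C⁻¹, by positivity⟩ (Dt + ε • ι) :=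
    ContinuousLinearMap.antilipschitz_of_bound _ fun ξ => by
      change ‖ξ‖ ≤ C⁻¹ * ‖Dt ξ + ε • ι ξ‖
      rw [norm_add_smul_eq hsa hre hnorm, inv_mul_eq_div, le_div_iff₀ hC, mul_comm]
      exact hlow ξ
  exact hanti.isInvertible_of_denseRange (denseRange_add_smul hsa him)

end inducedPMap

section Resolvent

variable {W H : Type*} [NormedAddCommGroup W] [InnerProductSpace ℂ W]
    [NormedAddCommGroup H] [InnerProductSpace ℂ H]

/-- `(T + ε)⁻¹` for `T = inducedPMap ι hinj Dt`, computed through the bounded map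
`Dt + ε • ι : W → H`. -/
noncomputable def inducedResolvent (ι Dt : W →L[ℂ] H) (ε : ℂ) : H →L[ℂ] H :=
  ι ∘L (Dt + ε • ι).inverse

variable {ι Dt : W →L[ℂ] H} {ε : ℂ}

theorem inducedResolvent_apply_add_smul (hinv : (Dt + ε • ι).IsInvertible) (ξ : W) :
    inducedResolvent ι Dt ε (Dt ξ + ε • ι ξ) = ι ξ :=
  congrArg ι (hinv.inverse_apply_self ξ)

theorem exists_inducedResolvent_apply_eq (hinv : (Dt + ε • ι).IsInvertible) (x : H) :
    ∃ ξ : W, inducedResolvent ι Dt ε x = ι ξ ∧ Dt ξ + ε • ι ξ = x :=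
  ⟨(Dt + ε • ι).inverse x, rfl, hinv.self_apply_inverse x⟩

theorem norm_inducedResolvent_le (hbound : ∀ ξ : W, ‖ι ξ‖ ≤ ‖Dt ξ + ε • ι ξ‖)
    (hinv : (Dt + ε • ι).IsInvertible) : ‖inducedResolvent ι Dt ε‖ ≤ 1 := by
  refine ContinuousLinearMap.opNorm_le_bound _ zero_le_one fun x => ?_
  obtain ⟨ξ, hξ, rfl⟩ := exists_inducedResolvent_apply_eq hinv x
  rw [hξ, one_mul]
  exact hbound ξ

theorem continuous_inducedResolvent [CompleteSpace W] {X : Type*} [TopologicalSpace X]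
    {D : X → W →L[ℂ] H} (hD : Continuous D) (hinv : ∀ x, (D x + ε • ι).IsInvertible) :
    Continuous fun x => inducedResolvent ι (D x) ε := by
  refine continuous_iff_continuousAt.mpr fun x => ?_
  have hinverse := ((hinv x).contDiffAt_map_inverse (n := 0)).continuousAt
  exact continuousAt_const.clm_comp
    (hinverse.comp (f := fun y => D y + ε • ι) (hD.add continuous_const).continuousAt)

end Resolvent

theorem resolvents_norm_continuous_general
    {W H : Type*} [NormedAddCommGroup W] [InnerProductSpace ℂ W] [CompleteSpace W]
    [NormedAddCommGroup H] [InnerProductSpace ℂ H] [CompleteSpace H]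
    (ι : W →L[ℂ] H) (hinj : Function.Injective ι)
    (D : ℝ → W →L[ℂ] H)
    (hsa : ∀ t : ℝ, IsSelfAdjoint (inducedPMap ι hinj (D t)))
    (C₁ : ℝ) (hC₁ : 0 < C₁)
    (hlow : ∀ (t : ℝ) (ξ : W), C₁ * ‖ξ‖ ≤ Real.sqrt (‖ι ξ‖ ^ 2 + ‖D t ξ‖ ^ 2))
    (hD : Continuous D) :
    ∃ Rp Rm : ℝ → H →L[ℂ] H,
      (∀ t : ℝ, ‖Rp t‖ ≤ 1 ∧ ‖Rm t‖ ≤ 1) ∧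
      (∀ (t : ℝ) (ξ : W),
        Rp t (D t ξ + Complex.I • ι ξ) = ι ξ ∧ Rm t (D t ξ - Complex.I • ι ξ) = ι ξ) ∧
      (∀ (t : ℝ) (x : H),
        (∃ ξ : W, Rp t x = ι ξ ∧ D t ξ + Complex.I • ι ξ = x) ∧
        (∃ ξ : W, Rm t x = ι ξ ∧ D t ξ - Complex.I • ι ξ = x)) ∧
      Continuous Rp ∧ Continuous Rm := by
  simp only [sub_eq_add_neg, ← neg_smul]
  have hre : (Complex.I).re = 0 ∧ (-Complex.I).re = 0 := by simp
  have hnorm : ‖Complex.I‖ = 1 ∧ ‖-Complex.I‖ = 1 := by simp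
  have hinvp t := inducedPMap.isInvertible_add_smul (hsa t) hC₁ (hlow t) hre.1 hnorm.1
  have hinvm t := inducedPMap.isInvertible_add_smul (hsa t) hC₁ (hlow t) hre.2 hnorm.2
  refine ⟨fun t => inducedResolvent ι (D t) Complex.I,
    fun t => inducedResolvent ι (D t) (-Complex.I), fun t => ⟨?_, ?_⟩,
    fun t ξ => ⟨inducedResolvent_apply_add_smul (hinvp t) ξ,
      inducedResolvent_apply_add_smul (hinvm t) ξ⟩,
    fun t x => ⟨exists_inducedResolvent_apply_eq (hinvp t) x,
      exists_inducedResolvent_apply_eq (hinvm t) x⟩,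
    continuous_inducedResolvent hD hinvp, continuous_inducedResolvent hD hinvm⟩
  · exact norm_inducedResolvent_le (inducedPMap.norm_le_norm_add_smul (hsa t) hre.1 hnorm.1)
      (hinvp t)
  · exact norm_inducedResolvent_le (inducedPMap.norm_le_norm_add_smul (hsa t) hre.2 hnorm.2)
      (hinvm t)

/-- Let `{D t}` be a family of bounded operators `W → H` such that the
induced operators on `H` with domain `ι(W)` are self-adjoint, with uniformly equivalent graph
norms, and `t ↦ D t` norm-continuous.  Then the operators `D t ± i` (with domain `ι(W)`)
have everywhere-defined bounded inverses `R t±` of norm at most `1`, and the resolvent maps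
`t ↦ R t±` are norm-continuous. -/
theorem resolvents_norm_continuous
    {W H : Type*} [NormedAddCommGroup W] [InnerProductSpace ℂ W] [CompleteSpace W]
    [NormedAddCommGroup H] [InnerProductSpace ℂ H] [CompleteSpace H]
    (ι : W →L[ℂ] H) (hinj : Function.Injective ι) (hdense : DenseRange ι)
    (D : ℝ → W →L[ℂ] H)
    (hsa : ∀ t : ℝ, IsSelfAdjoint (inducedPMap ι hinj (D t)))
    (C₁ C₂ : ℝ) (hC₁ : 0 < C₁) (hC₂ : 0 < C₂)
    (hlow : ∀ (t : ℝ) (ξ : W), C₁ * ‖ξ‖ ≤ Real.sqrt (‖ι ξ‖ ^ 2 + ‖D t ξ‖ ^ 2))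
    (hup : ∀ (t : ℝ) (ξ : W), Real.sqrt (‖ι ξ‖ ^ 2 + ‖D t ξ‖ ^ 2) ≤ C₂ * ‖ξ‖)
    (hD : Continuous D) :
    ∃ Rp Rm : ℝ → H →L[ℂ] H,
      (∀ t : ℝ, ‖Rp t‖ ≤ 1 ∧ ‖Rm t‖ ≤ 1) ∧
      (∀ (t : ℝ) (ξ : W),
        Rp t (D t ξ + Complex.I • ι ξ) = ι ξ ∧ Rm t (D t ξ - Complex.I • ι ξ) = ι ξ) ∧
      (∀ (t : ℝ) (x : H),
        (∃ ξ : W, Rp t x = ι ξ ∧ D t ξ + Complex.I • ι ξ = x) ∧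
        (∃ ξ : W, Rm t x = ι ξ ∧ D t ξ - Complex.I • ι ξ = x)) ∧
      Continuous Rp ∧ Continuous Rm :=
  resolvents_norm_continuous_general ι hinj D hsa C₁ hC₁ hlow hD
end

section
/- Let {D_t}_{t∈ℝ} be as follows: D_t : W → H bounded, for each t the unbounded operator on H with domain ι(W) sending ιξ to D_t ξ is self-adjoint, the graph norms are uniformly equivalent to the W-norm (there exist C₁, C₂ > 0 with C₁‖ξ‖_W ≤ (‖ιξ‖_H² + ‖D_t ξ‖_H²)^{1/2} ≤ C₂‖ξ‖_W for all ξ, t), and t ↦ D_t ∈ B(W,H) is norm-continuous; write R_t := (D_t + i)⁻¹ ∈ B(H). Let t ↦ π_t ∈ B(H) be norm-continuous with sup_{t∈ℝ} ‖π_t‖ < ∞, and suppose π_t R_t is a compact operator for each t ∈ ℝ. Then for every continuous function f : ℝ → ℂ vanishing at infinity, the map t ↦ f(t) π_t R_t is norm-continuous, takes values in the compact operators on H, and its operator norm tends to 0 as |t| → ∞. -/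
/-!
Self-adjointness makes `⟪D_t ξ, ι ξ⟫` real, so `‖(D_t + i) ξ‖² = ‖ι ξ‖² + ‖D_t ξ‖²`. Hence
`‖R_t‖ ≤ 1`, and the lower graph-norm bound gives `‖ξ‖ ≤ C₁⁻¹ ‖x‖` when `x = (D_t + i) ξ`.
The resolvent identity `R_s - R_t = R_s (D_t - D_s) (ι⁻¹ R_t)` then yields
`‖R_s - R_t‖ ≤ C₁⁻¹ ‖D_s - D_t‖`, so `t ↦ R_t` is norm-continuous, and
`‖f t • π_t R_t‖ ≤ Cπ ‖f t‖ → 0`.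
-/

open Complex

theorem IsSelfAdjoint.isFormalAdjoint_s11 {𝕜 E : Type*} [RCLike 𝕜] [NormedAddCommGroup E]
    [InnerProductSpace 𝕜 E] [CompleteSpace E] {A : E →ₗ.[𝕜] E} (hA : IsSelfAdjoint A) :
    A.IsFormalAdjoint A := by
  have h := LinearPMap.adjoint_isFormalAdjoint hA.dense_domain
  rwa [LinearPMap.isSelfAdjoint_def.mp hA] at h

theorem norm_add_I_smul_sq {E : Type*} [NormedAddCommGroup E] [InnerProductSpace ℂ E]
    {x y : E} (h : (inner ℂ x y).im = 0) : ‖x + I • y‖ ^ 2 = ‖x‖ ^ 2 + ‖y‖ ^ 2 := by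
  simp [norm_add_sq (𝕜 := ℂ), inner_smul_right, norm_smul, h]

theorem continuous_of_norm_sub_le {X E F : Type*} [TopologicalSpace X]
    [SeminormedAddCommGroup E] [SeminormedAddCommGroup F] {f : X → E} {g : X → F}
    (hf : Continuous f) (K : ℝ) (h : ∀ x y, ‖g x - g y‖ ≤ K * ‖f x - f y‖) : Continuous g := by
  refine continuous_iff_continuousAt.mpr fun y => tendsto_iff_norm_sub_tendsto_zero.mpr ?_
  have hK : Filter.Tendsto (fun x => K * ‖f x - f y‖) (nhds y) (nhds 0) := by
    simpa using ((hf.tendsto y).sub_const (f y)).norm.const_mul K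
  exact squeeze_zero (fun _ => norm_nonneg _) (fun x => h x y) hK

section InducedPMap

variable {W H : Type*} [NormedAddCommGroup W] [InnerProductSpace ℂ W]
  [NormedAddCommGroup H] [InnerProductSpace ℂ H] {ι : W →L[ℂ] H}

theorem inducedPMap_apply (hinj : Function.Injective ι) (Dt : W →L[ℂ] H) (ξ : W) :
    inducedPMap ι hinj Dt ⟨ι ξ, ξ, rfl⟩ = Dt ξ :=
  congrArg Dt ((LinearEquiv.symm_apply_eq _).mpr rfl)

theorem inner_inducedPMap_symm [CompleteSpace H] {hinj : Function.Injective ι}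
    {Dt : W →L[ℂ] H} (hsa : IsSelfAdjoint (inducedPMap ι hinj Dt)) (ξ η : W) :
    inner ℂ (Dt ξ) (ι η) = inner ℂ (ι ξ) (Dt η) := by
  simpa only [inducedPMap_apply] using hsa.isFormalAdjoint_s11 ⟨ι ξ, ξ, rfl⟩ ⟨ι η, η, rfl⟩

theorem norm_add_I_smul_eq_sqrt_of_isSelfAdjoint [CompleteSpace H]
    {hinj : Function.Injective ι} {Dt : W →L[ℂ] H}
    (hsa : IsSelfAdjoint (inducedPMap ι hinj Dt)) (ξ : W) :
    ‖Dt ξ + I • ι ξ‖ = Real.sqrt (‖ι ξ‖ ^ 2 + ‖Dt ξ‖ ^ 2) := by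
  have him : (inner ℂ (Dt ξ) (ι ξ)).im = 0 := by
    rw [← Complex.conj_eq_iff_im, inner_conj_symm, inner_inducedPMap_symm hsa]
  rw [add_comm (‖ι ξ‖ ^ 2), ← norm_add_I_smul_sq him, Real.sqrt_sq (norm_nonneg _)]

end InducedPMap

section Resolvent

variable {W H : Type*} [NormedAddCommGroup W] [NormedSpace ℂ W]
  [NormedAddCommGroup H] [NormedSpace ℂ H] {ι D D' : W →L[ℂ] H} {R R' : H →L[ℂ] H}

theorem opNorm_resolvent_le_one (hR : ∀ x, ∃ ξ, R x = ι ξ ∧ D ξ + I • ι ξ = x)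
    (hι : ∀ ξ, ‖ι ξ‖ ≤ ‖D ξ + I • ι ξ‖) : ‖R‖ ≤ 1 := by
  refine R.opNorm_le_bound zero_le_one fun x => ?_
  obtain ⟨ξ, hRx, rfl⟩ := hR x
  rw [hRx, one_mul]
  exact hι ξ

theorem norm_sub_resolvent_le (hR : ∀ ξ, R (D ξ + I • ι ξ) = ι ξ)
    (hR' : ∀ x, ∃ ξ, R' x = ι ξ ∧ D' ξ + I • ι ξ = x) (hR1 : ‖R‖ ≤ 1) {C : ℝ} (hC : 0 < C)
    (hlow : ∀ ξ, C * ‖ξ‖ ≤ ‖D' ξ + I • ι ξ‖) : ‖R - R'‖ ≤ C⁻¹ * ‖D - D'‖ := by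
  refine (R - R').opNorm_le_bound (by positivity) fun x => ?_
  obtain ⟨ξ, hR'x, rfl⟩ := hR' x
  have hdiff : (R - R') (D' ξ + I • ι ξ) = R ((D' - D) ξ) := by
    have hsub : (D' - D) ξ = (D' ξ + I • ι ξ) - (D ξ + I • ι ξ) := by
      rw [sub_apply, add_sub_add_right_eq_sub]
    rw [hsub, map_sub, hR, sub_apply, hR'x]
  have hξ : ‖ξ‖ ≤ C⁻¹ * ‖D' ξ + I • ι ξ‖ := (le_inv_mul_iff₀ hC).mpr (hlow ξ)
  calc ‖(R - R') (D' ξ + I • ι ξ)‖ = ‖R ((D' - D) ξ)‖ := by rw [hdiff]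
    _ ≤ ‖(D' - D) ξ‖ := by simpa using R.le_of_opNorm_le hR1 ((D' - D) ξ)
    _ ≤ ‖D - D'‖ * ‖ξ‖ := norm_sub_rev D D' ▸ (D' - D).le_opNorm ξ
    _ ≤ ‖D - D'‖ * (C⁻¹ * ‖D' ξ + I • ι ξ‖) := by gcongr
    _ = C⁻¹ * ‖D - D'‖ * ‖D' ξ + I • ι ξ‖ := by ring

end Resolvent

theorem smul_pi_resolvent_c0_general
    {W H : Type*} [NormedAddCommGroup W] [InnerProductSpace ℂ W]
    [NormedAddCommGroup H] [InnerProductSpace ℂ H] [CompleteSpace H]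
    (ι : W →L[ℂ] H) (hinj : Function.Injective ι)
    (D : ℝ → W →L[ℂ] H)
    (hsa : ∀ t : ℝ, IsSelfAdjoint (inducedPMap ι hinj (D t)))
    (C₁ : ℝ) (hC₁ : 0 < C₁)
    (hlow : ∀ (t : ℝ) (ξ : W), C₁ * ‖ξ‖ ≤ Real.sqrt (‖ι ξ‖ ^ 2 + ‖D t ξ‖ ^ 2))
    (hD : Continuous D)
    (R : ℝ → H →L[ℂ] H)
    (hR₁ : ∀ (t : ℝ) (ξ : W), R t (D t ξ + Complex.I • ι ξ) = ι ξ)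
    (hR₂ : ∀ (t : ℝ) (x : H), ∃ ξ : W, R t x = ι ξ ∧ D t ξ + Complex.I • ι ξ = x)
    (π : ℝ → H →L[ℂ] H) (hπ : Continuous π)
    (Cπ : ℝ) (hπbdd : ∀ t : ℝ, ‖π t‖ ≤ Cπ)
    (hcpt : ∀ t : ℝ, IsCompactOperator ((π t).comp (R t)))
    (f : ℝ → ℂ) (hf : Continuous f)
    (hf0 : Filter.Tendsto f (Filter.cocompact ℝ) (nhds 0)) :
    Continuous (fun t : ℝ => f t • (π t).comp (R t)) ∧
      (∀ t : ℝ, IsCompactOperator (f t • (π t).comp (R t))) ∧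
      Filter.Tendsto (fun t : ℝ => ‖f t • (π t).comp (R t)‖)
        (Filter.cocompact ℝ) (nhds 0) := by
  have hsqrt := fun t => norm_add_I_smul_eq_sqrt_of_isSelfAdjoint (hsa t)
  have hR_le : ∀ t, ‖R t‖ ≤ 1 := fun t =>
    opNorm_resolvent_le_one (hR₂ t) fun ξ => by
      rw [hsqrt]
      exact Real.le_sqrt_of_sq_le (le_add_of_nonneg_right (sq_nonneg _))
  have hR : Continuous R := continuous_of_norm_sub_le hD C₁⁻¹ fun s t =>
    norm_sub_resolvent_le (hR₁ s) (hR₂ t) (hR_le s) hC₁ fun ξ => hsqrt t ξ ▸ hlow t ξ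
  have hπR_bdd : Filter.IsBoundedUnder (· ≤ ·) (Filter.cocompact ℝ)
      (norm ∘ fun t => (π t).comp (R t)) :=
    Filter.isBoundedUnder_of ⟨Cπ, fun t => ((π t).opNorm_comp_le (R t)).trans <|
      (mul_le_of_le_one_right (norm_nonneg _) (hR_le t)).trans (hπbdd t)⟩
  refine ⟨hf.smul (hπ.clm_comp hR), fun t => (hcpt t).smul (f t), ?_⟩
  simpa using (hf0.zero_smul_isBoundedUnder_le hπR_bdd).norm

/-- Let `{D t}` be a norm-continuous family of bounded operators `W → H`
whose induced operators on `H` (with domain `ι(W)`) are self-adjoint, with uniformly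
equivalent graph norms, and resolvents `R t = (D t + i)⁻¹`.  Let `t ↦ π t ∈ B(H)` be
norm-continuous and uniformly bounded, with `π t ∘ R t` compact for every `t`.  Then for
every continuous `f : ℝ → ℂ` vanishing at infinity, the map `t ↦ f t • (π t ∘ R t)` is
norm-continuous, takes values in the compact operators, and its norm tends to `0` at
infinity. -/
theorem smul_pi_resolvent_c0
    {W H : Type*} [NormedAddCommGroup W] [InnerProductSpace ℂ W] [CompleteSpace W]
    [NormedAddCommGroup H] [InnerProductSpace ℂ H] [CompleteSpace H]
    (ι : W →L[ℂ] H) (hinj : Function.Injective ι) (hdense : DenseRange ι)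
    (D : ℝ → W →L[ℂ] H)
    (hsa : ∀ t : ℝ, IsSelfAdjoint (inducedPMap ι hinj (D t)))
    (C₁ C₂ : ℝ) (hC₁ : 0 < C₁) (hC₂ : 0 < C₂)
    (hlow : ∀ (t : ℝ) (ξ : W), C₁ * ‖ξ‖ ≤ Real.sqrt (‖ι ξ‖ ^ 2 + ‖D t ξ‖ ^ 2))
    (hup : ∀ (t : ℝ) (ξ : W), Real.sqrt (‖ι ξ‖ ^ 2 + ‖D t ξ‖ ^ 2) ≤ C₂ * ‖ξ‖)
    (hD : Continuous D)
    (R : ℝ → H →L[ℂ] H)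
    (hR₁ : ∀ (t : ℝ) (ξ : W), R t (D t ξ + Complex.I • ι ξ) = ι ξ)
    (hR₂ : ∀ (t : ℝ) (x : H), ∃ ξ : W, R t x = ι ξ ∧ D t ξ + Complex.I • ι ξ = x)
    (π : ℝ → H →L[ℂ] H) (hπ : Continuous π)
    (Cπ : ℝ) (hπbdd : ∀ t : ℝ, ‖π t‖ ≤ Cπ)
    (hcpt : ∀ t : ℝ, IsCompactOperator ((π t).comp (R t)))
    (f : ℝ → ℂ) (hf : Continuous f)
    (hf0 : Filter.Tendsto f (Filter.cocompact ℝ) (nhds 0)) :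
    Continuous (fun t : ℝ => f t • (π t).comp (R t)) ∧
      (∀ t : ℝ, IsCompactOperator (f t • (π t).comp (R t))) ∧
      Filter.Tendsto (fun t : ℝ => ‖f t • (π t).comp (R t)‖)
        (Filter.cocompact ℝ) (nhds 0) :=
  smul_pi_resolvent_c0_general ι hinj D hsa C₁ hC₁ hlow hD R hR₁ hR₂ π hπ Cπ hπbdd hcpt f hf hf0
end
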